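/- arXiv:1711.08711 — 11 statements merged into one kernel-verified Lean document; each statement's English description precedes it below -/
import Mathlib

section
/- For any edge-colouring c : E(K↔_ℕ) → [r+1] of the complete symmetric digraph on ℕ for which there is no monochromatic directed path of edge-length ℓ_i in colour i for any i ∈ [r], there exists a monochromatic directed path in colour r+1 whose vertex set has upper density at least ∏_{i≤r} ℓ_i^{-1}. -/
/-!
Colour `i ≤ r` alone forms a digraph with no path on `ℓ i + 1` vertices, so by the Gallai–Roy
theorem its vertices admit a proper colouring with `ℓ i` colours: colour each vertex by its
depth in a maximal acyclic subdigraph (an edge outside it would close a cycle, so its head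
is strictly shallower than its tail). Taking the product of these colourings partitions `ℕ`
into `∏ ℓ i` classes, and inside one class every edge has colour `r + 1`, so any enumeration of
an infinite class is a monochromatic path. By pigeonhole, for every `n` some class contains a
`1 / ∏ ℓ i` fraction of `[n]`; one class does so for infinitely many `n`, which bounds its
upper density from below (and makes it infinite).
-/

/-- `l` is a finite directed path (a list of distinct vertices, with consecutive edges),
monochromatic in colour `j`, in the complete symmetric digraph on `V` edge-coloured by `c`.
Its edge-length is `l.length - 1`. -/
def IsMonoPathList {V : Type*} {N : ℕ} (c : V → V → Fin N) (j : Fin N) (l : List V) : Prop :=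
  l.Nodup ∧ l.Chain' fun u v => c u v = j

/-- `S` is the vertex set of a (finite or one-way infinite) directed path, monochromatic in
colour `j`, in the complete symmetric digraph on `V` edge-coloured by `c`. -/
def IsMonoPathSet {V : Type*} {N : ℕ} (c : V → V → Fin N) (j : Fin N) (S : Set V) : Prop :=
  (∃ l : List V, IsMonoPathList c j l ∧ S = {x | x ∈ l}) ∨
  (∃ f : ℕ → V, Function.Injective f ∧ (∀ n, c (f n) (f (n + 1)) = j) ∧ S = Set.range f)

/-- The upper density of a set `A ⊆ ℕ`: `limsup_{n → ∞} |A ∩ [n]| / n` where `[n] = {1, …, n}`. -/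
noncomputable def upperDensity (A : Set ℕ) : ℝ :=
  Filter.limsup (fun n : ℕ => ((A ∩ Set.Icc 1 n).ncard : ℝ) / (n : ℝ)) Filter.atTop

namespace Relation

variable {α : Type*} {R E : α → α → Prop} {u v : α}

def IsAcyclic (R : α → α → Prop) : Prop := ∀ a, ¬TransGen R a a

theorem IsAcyclic.nodup_of_isChain (hR : IsAcyclic R) {l : List α} (hl : l.IsChain R) :
    l.Nodup := by
  refine (List.isChain_iff_pairwise.mp (hl.imp fun _ _ => TransGen.single)).imp ?_
  rintro a _ haa rfl
  exact hR a haa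

theorem transGen_add_edge_cases {a b : α}
    (h : TransGen (fun x y => R x y ∨ x = u ∧ y = v) a b) :
    TransGen R a b ∨ ReflTransGen R a u ∧ ReflTransGen R v b := by
  induction h with
  | single hab =>
    rcases hab with hab | ⟨rfl, rfl⟩
    · exact .inl (.single hab)
    · exact .inr ⟨.refl, .refl⟩
  | tail _ hbc ih =>
    rcases hbc with hbc | ⟨rfl, rfl⟩
    · exact ih.imp (·.tail hbc) fun ⟨hau, hvb⟩ => ⟨hau, hvb.tail hbc⟩
    · exact .inr ⟨ih.elim TransGen.to_reflTransGen And.left, .refl⟩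

theorem IsAcyclic.add_edge (hR : IsAcyclic R) (hvu : ¬ReflTransGen R v u) :
    IsAcyclic fun x y => R x y ∨ x = u ∧ y = v := fun a ha =>
  (transGen_add_edge_cases ha).elim (hR a) fun ⟨hau, hva⟩ => hvu (hva.trans hau)

theorem exists_mem_transGen_of_isChain {C : Set (α → α → Prop)} (hC : IsChain (· ≤ ·) C)
    {a b : α} (h : TransGen (fun x y => ∃ S ∈ C, S x y) a b) : ∃ S ∈ C, TransGen S a b := by
  induction h with
  | single hab => obtain ⟨S, hS, hab⟩ := hab; exact ⟨S, hS, .single hab⟩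
  | tail _ hbc ih =>
    obtain ⟨S, hS, hab⟩ := ih
    obtain ⟨T, hT, hbc⟩ := hbc
    rcases hC.total hS hT with hST | hTS
    · exact ⟨T, hT, (TransGen.mono hST _ _ hab).tail hbc⟩
    · exact ⟨S, hS, hab.tail (hTS _ _ hbc)⟩

theorem exists_maximal_isAcyclic_le (E : α → α → Prop) :
    ∃ R, Maximal (fun R => R ≤ E ∧ IsAcyclic R) R :=
  zorn_le₀ _ fun C hCE hC => ⟨fun x y => ∃ S ∈ C, S x y,
    ⟨fun _ _ ⟨_, hS, hxy⟩ => (hCE hS).1 _ _ hxy,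
      fun a ha => have ⟨_, hS, haa⟩ := exists_mem_transGen_of_isChain hC ha; (hCE hS).2 a haa⟩,
    fun S hS _ _ hxy => ⟨S, hS, hxy⟩⟩

theorem rel_or_transGen_of_maximal_isAcyclic (hR : Maximal (fun R => R ≤ E ∧ IsAcyclic R) R)
    (huv : E u v) (hne : u ≠ v) : R u v ∨ TransGen R v u := by
  by_cases hvu : ReflTransGen R v u
  · exact .inr ((reflTransGen_iff_eq_or_transGen.mp hvu).resolve_left hne)
  · have hle : (fun x y => R x y ∨ x = u ∧ y = v) ≤ E := fun x y hxy =>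
      hxy.elim (hR.1.1 x y) fun ⟨hx, hy⟩ => hx ▸ hy ▸ huv
    exact .inl (hR.2 ⟨hle, hR.1.2.add_edge hvu⟩ (fun _ _ => .inl) u v (.inr ⟨rfl, rfl⟩))

section ChainDepth

variable {L : ℕ}

noncomputable def chainDepth (R : α → α → Prop) (v : α) : ℕ :=
  sSup {n | ∃ l : List α, (l ++ [v]).IsChain R ∧ l.length = n}

theorem bddAbove_chainDepth_set (hL : ∀ l : List α, l.IsChain R → l.length ≤ L) (v : α) :
    BddAbove {n | ∃ l : List α, (l ++ [v]).IsChain R ∧ l.length = n} := by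
  refine ⟨L, ?_⟩
  rintro _ ⟨l, hl, rfl⟩
  exact (hL _ hl).trans' (by simp)

theorem exists_isChain_length_eq_chainDepth (hL : ∀ l : List α, l.IsChain R → l.length ≤ L)
    (v : α) : ∃ l : List α, (l ++ [v]).IsChain R ∧ l.length = chainDepth R v :=
  Nat.sSup_mem ⟨0, by exact ⟨[], List.isChain_singleton v, rfl⟩⟩ (bddAbove_chainDepth_set hL v)

theorem length_le_chainDepth (hL : ∀ l : List α, l.IsChain R → l.length ≤ L) {l : List α}
    (hl : (l ++ [v]).IsChain R) : l.length ≤ chainDepth R v :=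
  le_csSup (bddAbove_chainDepth_set hL v) ⟨l, hl, rfl⟩

theorem chainDepth_lt (hL : ∀ l : List α, l.IsChain R → l.length ≤ L) (v : α) :
    chainDepth R v < L := by
  obtain ⟨l, hl, hlen⟩ := exists_isChain_length_eq_chainDepth hL v
  have := hL _ hl
  simp only [List.length_append, List.length_singleton] at this
  omega

theorem chainDepth_lt_of_rel (hL : ∀ l : List α, l.IsChain R → l.length ≤ L) (huv : R u v) :
    chainDepth R u < chainDepth R v := by
  obtain ⟨l, hl, hlen⟩ := exists_isChain_length_eq_chainDepth hL u
  have hl' : (l ++ [u] ++ [v]).IsChain R := hl.append (List.isChain_singleton v) (by simp [huv])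
  simpa [hlen] using length_le_chainDepth hL hl'

theorem chainDepth_lt_of_transGen (hL : ∀ l : List α, l.IsChain R → l.length ≤ L)
    (h : TransGen R u v) : chainDepth R u < chainDepth R v := by
  induction h with
  | single h => exact chainDepth_lt_of_rel hL h
  | tail _ h ih => exact ih.trans (chainDepth_lt_of_rel hL h)

end ChainDepth

theorem exists_fin_coloring_of_forall_path_length_le (E : α → α → Prop) (L : ℕ)
    (hE : ∀ l : List α, l.Nodup → l.IsChain E → l.length ≤ L) :
    ∃ g : α → Fin L, ∀ u v, u ≠ v → E u v → g u ≠ g v := by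
  obtain ⟨R, hR⟩ := exists_maximal_isAcyclic_le E
  have hL : ∀ l : List α, l.IsChain R → l.length ≤ L := fun l hl =>
    hE l (hR.1.2.nodup_of_isChain hl) (hl.imp hR.1.1)
  refine ⟨fun v => ⟨chainDepth R v, chainDepth_lt hL v⟩, fun u v hne huv => ?_⟩
  rw [ne_eq, Fin.mk.injEq]
  rcases rel_or_transGen_of_maximal_isAcyclic hR huv hne with h | h
  · exact (chainDepth_lt_of_rel hL h).ne
  · exact (chainDepth_lt_of_transGen hL h).ne'

end Relation

open Filter
open scoped Finset

noncomputable def densityUpTo (A : Set ℕ) (n : ℕ) : ℝ := ((A ∩ Set.Icc 1 n).ncard : ℝ) / n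

theorem ncard_inter_Icc_le (A : Set ℕ) (n : ℕ) : (A ∩ Set.Icc 1 n).ncard ≤ n :=
  (Set.ncard_le_ncard Set.inter_subset_right (Set.finite_Icc 1 n)).trans (by simp)

theorem densityUpTo_le_one (A : Set ℕ) (n : ℕ) : densityUpTo A n ≤ 1 :=
  div_le_one_of_le₀ (by exact_mod_cast ncard_inter_Icc_le A n) n.cast_nonneg

theorem le_upperDensity_of_frequently {A : Set ℕ} {x : ℝ}
    (h : ∃ᶠ n in atTop, x ≤ densityUpTo A n) : x ≤ upperDensity A :=
  le_limsup_of_frequently_le h (isBoundedUnder_of ⟨1, densityUpTo_le_one A⟩)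

theorem upperDensity_eq_zero_of_finite {A : Set ℕ} (hA : A.Finite) : upperDensity A = 0 := by
  refine Tendsto.limsup_eq (squeeze_zero (fun n => by positivity) (fun n => ?_)
    (tendsto_const_div_atTop_nhds_zero_nat (A.ncard : ℝ)))
  exact div_le_div_of_nonneg_right
    (by exact_mod_cast Set.ncard_le_ncard Set.inter_subset_left hA) n.cast_nonneg

theorem infinite_of_upperDensity_pos {A : Set ℕ} (h : 0 < upperDensity A) : A.Infinite :=
  fun hA => h.ne' (upperDensity_eq_zero_of_finite hA)

theorem exists_inv_card_le_densityUpTo {β : Type*} [Fintype β] (G : ℕ → β) {n : ℕ} (hn : 0 < n) :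
    ∃ y, (Fintype.card β : ℝ)⁻¹ ≤ densityUpTo (G ⁻¹' {y}) n := by
  classical
  have : Nonempty β := ⟨G 0⟩
  have hβ : (Fintype.card β : ℝ) ≠ 0 := by exact_mod_cast Fintype.card_ne_zero (α := β)
  obtain ⟨y, -, hy⟩ := Finset.exists_le_card_fiber_of_nsmul_le_card_of_maps_to
    (s := Finset.Icc 1 n) (f := G) (b := (n : ℝ) / Fintype.card β)
    (fun _ _ => Finset.mem_univ _) Finset.univ_nonempty (by simp [mul_div_cancel₀ _ hβ])
  have hfiber : (G ⁻¹' {y} ∩ Set.Icc 1 n).ncard = #{x ∈ Finset.Icc 1 n | G x = y} := by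
    rw [← Set.ncard_coe_finset]
    congr 1
    ext; simp [and_comm]
  refine ⟨y, ?_⟩
  rw [densityUpTo, hfiber, le_div_iff₀ (by exact_mod_cast hn), ← div_eq_inv_mul]
  exact hy

theorem exists_inv_card_le_upperDensity_preimage {β : Type*} [Fintype β] (G : ℕ → β) :
    ∃ y, (Fintype.card β : ℝ)⁻¹ ≤ upperDensity (G ⁻¹' {y}) := by
  have h : ∃ᶠ n in atTop, ∃ y, (Fintype.card β : ℝ)⁻¹ ≤ densityUpTo (G ⁻¹' {y}) n :=
    (eventually_gt_atTop 0).frequently.mono fun _ => exists_inv_card_le_densityUpTo G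
  obtain ⟨y, hy⟩ := frequently_exists.mp h
  exact ⟨y, le_upperDensity_of_frequently hy⟩

theorem isMonoPathSet_of_infinite {N : ℕ} {c : ℕ → ℕ → Fin N} {j : Fin N} {A : Set ℕ}
    (hA : A.Infinite) (hc : ∀ u ∈ A, ∀ v ∈ A, u ≠ v → c u v = j) : IsMonoPathSet c j A :=
  .inr ⟨Nat.nth (· ∈ A), Nat.nth_injective hA,
    fun n => hc _ (Nat.nth_mem_of_infinite hA n) _ (Nat.nth_mem_of_infinite hA (n + 1))
      ((Nat.nth_injective hA).ne n.succ_ne_self.symm),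
    (Nat.range_nth_of_infinite hA).symm⟩

theorem monochromatic_path_upperDensity_general (r : ℕ) (c : ℕ → ℕ → Fin (r + 1))
    (ℓ : Fin r → ℕ)
    (hno : ∀ i : Fin r,
      ¬ ∃ l : List ℕ, IsMonoPathList c i.castSucc l ∧ l.length = ℓ i + 1) :
    ∃ S : Set ℕ, IsMonoPathSet c (Fin.last r) S ∧
      (∏ i, (ℓ i : ℝ))⁻¹ ≤ upperDensity S := by
  have hpaths : ∀ i : Fin r, ∀ l : List ℕ, l.Nodup →
      l.IsChain (fun u v => c u v = i.castSucc) → l.length ≤ ℓ i := by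
    intro i l hnd hch
    by_contra! hlen
    exact hno i ⟨l.take (ℓ i + 1), ⟨hnd.sublist (l.take_sublist _), hch.take _⟩, by simp; omega⟩
  choose g hg using fun i => Relation.exists_fin_coloring_of_forall_path_length_le _ _ (hpaths i)
  set G : ℕ → ∀ i, Fin (ℓ i) := fun v i => g i v
  obtain ⟨y, hy⟩ := exists_inv_card_le_upperDensity_preimage G
  have hA : (G ⁻¹' {y}).Infinite := infinite_of_upperDensity_pos <|
    (inv_pos.2 (by exact_mod_cast Fintype.card_pos_iff.2 ⟨G 0⟩)).trans_le hy
  refine ⟨G ⁻¹' {y}, isMonoPathSet_of_infinite hA fun u hu v hv huv => ?_,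
    by simpa [Fintype.card_pi] using hy⟩
  by_contra hlast
  obtain ⟨i, hi⟩ := Fin.exists_castSucc_eq.2 hlast
  exact hg i u v huv hi.symm (congrFun (hu.trans hv.symm) i)

/-- For any `(r+1)`-edge-colouring of the complete symmetric digraph on `ℕ` with no
monochromatic directed path of edge-length `ℓ i` in colour `i` for any `i ∈ [r]`, there is
a monochromatic directed path in colour `r+1` whose vertex set has upper density at least
`(∏ i, ℓ i)⁻¹`. -/
theorem monochromatic_path_upperDensity (r : ℕ) (c : ℕ → ℕ → Fin (r + 1))
    (ℓ : Fin r → ℕ) (hℓ : ∀ i, 0 < ℓ i)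
    (hno : ∀ i : Fin r,
      ¬ ∃ l : List ℕ, IsMonoPathList c i.castSucc l ∧ l.length = ℓ i + 1) :
    ∃ S : Set ℕ, IsMonoPathSet c (Fin.last r) S ∧
      (∏ i, (ℓ i : ℝ))⁻¹ ≤ upperDensity S :=
  monochromatic_path_upperDensity_general r c ℓ hno
end

section
/- Let G be a complete symmetric digraph, either finite or countably infinite. For every edge-colouring c : E(G) → [r+1] for which there is no monochromatic directed path of edge-length ℓ_i in colour i for any i ∈ [r], the vertex set of G can be covered by ∏_{i≤r} ℓ_i pairwise vertex-disjoint monochromatic directed paths in colour r+1. -/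
open Relation

namespace Relation

variable {α : Type*} {A : α → α → Prop}

theorem transGen_sSup_of_directedOn {c : Set (α → α → Prop)} (hc : DirectedOn (· ≤ ·) c)
    {x y : α} (h : TransGen (sSup c) x y) : ∃ A ∈ c, TransGen A x y := by
  induction h with
  | single hxy =>
    obtain ⟨A, hA, hxy⟩ : ∃ A ∈ c, A _ _ := by simpa using hxy
    exact ⟨A, hA, .single hxy⟩
  | tail _ hbz ih =>
    obtain ⟨A₁, hA₁, hxb⟩ := ih
    obtain ⟨A₂, hA₂, hbz⟩ : ∃ A ∈ c, A _ _ := by simpa using hbz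
    obtain ⟨A, hA, h₁, h₂⟩ := hc A₁ hA₁ A₂ hA₂
    exact ⟨A, hA, (TransGen.mono h₁ _ _ hxb).tail (h₂ _ _ hbz)⟩

theorem TransGen.sup_edge {u v x y : α} (h : TransGen (A ⊔ fun a b => a = u ∧ b = v) x y) :
    TransGen A x y ∨ ReflTransGen A x u ∧ ReflTransGen A v y := by
  induction h with
  | single hxy =>
    rcases hxy with hxy | ⟨rfl, rfl⟩
    · exact .inl (.single hxy)
    · exact .inr ⟨.refl, .refl⟩
  | tail _ hbz ih =>
    rcases hbz with hbz | ⟨rfl, rfl⟩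
    · rcases ih with hxb | ⟨hxu, hvb⟩
      · exact .inl (hxb.tail hbz)
      · exact .inr ⟨hxu, hvb.tail hbz⟩
    · rcases ih with hxb | ⟨hxu, -⟩
      · exact .inr ⟨hxb.to_reflTransGen, .refl⟩
      · exact .inr ⟨hxu, .refl⟩

end Relation

namespace List

variable {α : Type*} {A : α → α → Prop}

theorem IsChain.nodup_of_irreflexive_transGen (hA : ∀ x, ¬ TransGen A x x) {l : List α}
    (hl : l.IsChain A) : l.Nodup := by
  refine (hl.imp fun _ _ => TransGen.single).pairwise.imp ?_
  rintro a _ hab rfl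
  exact hA a hab

end List

section Levels

variable {V : Type*}

theorem exists_level_of_isChain_length_le {A : V → V → Prop} {m : ℕ}
    (h : ∀ l : List V, l.IsChain A → l.length ≤ m) :
    ∃ φ : V → Fin m, ∀ u v, TransGen A u v → φ v < φ u := by
  classical
  -- `L v` is the set of lengths of `A`-chains starting at `v`, each counted without `v`.
  let L : V → Set ℕ := fun v => {n | ∃ l : List V, (v :: l).IsChain A ∧ l.length = n}
  have hL_lt : ∀ v, ∀ n ∈ L v, n < m := by
    rintro v n ⟨l, hl, rfl⟩
    simpa using h _ hl
  have hL_bdd : ∀ v, BddAbove (L v) := fun v => ⟨m, fun n hn => (hL_lt v n hn).le⟩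
  have hL_mem : ∀ v, sSup (L v) ∈ L v := fun v =>
    Nat.sSup_mem ⟨0, [], .singleton v, rfl⟩ (hL_bdd v)
  let φ : V → Fin m := fun v => ⟨sSup (L v), hL_lt v _ (hL_mem v)⟩
  have hstep : ∀ u v, A u v → φ v < φ u := by
    intro u v huv
    obtain ⟨l, hl, hlen⟩ := hL_mem v
    have : sSup (L v) + 1 ∈ L u := ⟨v :: l, List.isChain_cons_cons.mpr ⟨huv, hl⟩, by simp [hlen]⟩
    exact Nat.lt_of_succ_le (le_csSup (hL_bdd u) this)
  refine ⟨φ, fun u v huv => ?_⟩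
  induction huv with
  | single h => exact hstep _ _ h
  | tail _ h ih => exact (hstep _ _ h).trans ih

/-- The Gallai–Roy theorem. -/
theorem exists_fin_coloring_of_nodup_isChain_length_le (R : V → V → Prop) (m : ℕ)
    (h : ∀ l : List V, l.Nodup → l.IsChain R → l.length ≤ m) :
    ∃ φ : V → Fin m, ∀ u v, u ≠ v → R u v → φ u ≠ φ v := by
  let S : Set (V → V → Prop) := {A | A ≤ R ∧ ∀ x, ¬ TransGen A x x}
  have hS_chain : ∀ ch ⊆ S, IsChain (· ≤ ·) ch → ∀ B ∈ ch, ∃ ub ∈ S, ∀ B ∈ ch, B ≤ ub := by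
    refine fun ch hch hchain _ _ => ⟨sSup ch, ⟨sSup_le fun B hB => (hch hB).1, fun x hx => ?_⟩,
      fun B => le_sSup⟩
    obtain ⟨B, hB, hxx⟩ := transGen_sSup_of_directedOn hchain.directedOn hx
    exact (hch hB).2 x hxx
  have hS_bot : ⊥ ∈ S := ⟨bot_le, fun x hx => (TransGen.head'_iff.mp hx).elim fun _ h => h.1⟩
  obtain ⟨A, -, hAmax⟩ := zorn_le_nonempty₀ S hS_chain ⊥ hS_bot
  have hA : A ≤ R ∧ ∀ x, ¬ TransGen A x x := hAmax.prop
  obtain ⟨φ, hφ⟩ := exists_level_of_isChain_length_le (A := A) fun l hl =>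
    h l (hl.nodup_of_irreflexive_transGen hA.2) (hl.imp hA.1)
  refine ⟨φ, fun u v huv hRuv => ?_⟩
  by_cases hAuv : A u v
  · exact (hφ u v (.single hAuv)).ne'
  -- By maximality, adding the edge `u → v` to `A` closes a cycle, which must run from `v` to `u`.
  have hcycle : ∃ x, TransGen (A ⊔ fun a b => a = u ∧ b = v) x x := by
    by_contra! hacyc
    have hle : (fun a b => a = u ∧ b = v) ≤ R := by
      rintro a b ⟨rfl, rfl⟩
      exact hRuv
    exact hAuv (hAmax.2 ⟨sup_le hA.1 hle, hacyc⟩ le_sup_left u v (.inr ⟨rfl, rfl⟩))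
  obtain ⟨x, hx⟩ := hcycle
  have hvu : ReflTransGen A v u := by
    rcases hx.sup_edge with hxx | ⟨hxu, hvx⟩
    · exact absurd hxx (hA.2 x)
    · exact hvx.trans hxu
  exact (hφ v u ((reflTransGen_iff_eq_or_transGen.mp hvu).resolve_left huv)).ne

end Levels

section MonoPaths

variable {V : Type*} {N : ℕ} {c : V → V → Fin N} {j : Fin N}

theorem IsMonoPathList.length_le {m : ℕ} (hno : ¬ ∃ l, IsMonoPathList c j l ∧ l.length = m + 1)
    {l : List V} (hl : IsMonoPathList c j l) : l.length ≤ m := by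
  by_contra! hlen
  exact hno ⟨l.take (m + 1), ⟨hl.1.sublist (List.take_sublist _ _), hl.2.take _⟩, by simp; omega⟩

theorem isMonoPathSet_of_pairwise [Countable V] {S : Set V}
    (hS : S.Pairwise fun u v => c u v = j) : IsMonoPathSet c j S := by
  rcases S.finite_or_infinite with hfin | hinf
  · have hnodup := hfin.toFinset.nodup_toList
    refine .inl ⟨hfin.toFinset.toList, ⟨hnodup, ?_⟩, by ext; simp⟩
    exact (hnodup.pairwise_of_set_pairwise (by simpa using hS)).isChain
  · have := hinf.to_subtype
    obtain ⟨_⟩ := nonempty_denumerable S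
    let e : ℕ ≃ S := (Denumerable.eqv S).symm
    refine .inr ⟨fun n => e n, Subtype.val_injective.comp e.injective, fun n => ?_, ?_⟩
    · exact hS (e n).2 (e (n + 1)).2 (by simp [Subtype.val_inj, e.injective.eq_iff])
    · rw [Set.range_comp', e.range_eq_univ, Set.image_univ, Subtype.range_coe]

end MonoPaths

theorem decomposition_countable_general {V : Type*} [Countable V] (r : ℕ)
    (c : V → V → Fin (r + 1)) (ℓ : Fin r → ℕ)
    (hno : ∀ i : Fin r,
      ¬ ∃ l : List V, IsMonoPathList c i.castSucc l ∧ l.length = ℓ i + 1) :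
    ∃ P : Fin (∏ i, ℓ i) → Set V,
      (∀ k, IsMonoPathSet c (Fin.last r) (P k)) ∧
      (Pairwise fun a b => Disjoint (P a) (P b)) ∧
      (⋃ k, P k) = Set.univ := by
  choose φ hφ using fun i : Fin r => exists_fin_coloring_of_nodup_isChain_length_le
    (fun u v => c u v = i.castSucc) (ℓ i) fun _ hnd hl =>
      IsMonoPathList.length_le (hno i) ⟨hnd, hl⟩
  let Φ : V → Fin (∏ i, ℓ i) := fun v => finPiFinEquiv fun i => φ i v
  refine ⟨fun k => Φ ⁻¹' {k}, fun k => isMonoPathSet_of_pairwise ?_,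
    fun a b hab => Disjoint.preimage Φ (Set.disjoint_singleton.mpr hab),
    by rw [← Set.preimage_iUnion, Set.iUnion_of_singleton, Set.preimage_univ]⟩
  rintro u (hu : Φ u = k) v (hv : Φ v = k) huv
  obtain ⟨i, hi⟩ | hlast := (c u v).eq_castSucc_or_eq_last
  · exact absurd (congrFun (finPiFinEquiv.injective (hu.trans hv.symm)) i) (hφ i u v huv hi)
  · exact hlast

/-- Let `G` be a complete symmetric digraph, finite or countably infinite (vertex type `V`
countable). For every `(r+1)`-edge-colouring with no monochromatic directed path of
edge-length `ℓ i` in colour `i` for any `i ∈ [r]`, the vertex set can be covered by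
`∏ i, ℓ i` pairwise disjoint monochromatic directed paths in colour `r+1`. -/
theorem decomposition_countable {V : Type*} [Countable V] (r : ℕ)
    (c : V → V → Fin (r + 1)) (ℓ : Fin r → ℕ) (hℓ : ∀ i, 0 < ℓ i)
    (hno : ∀ i : Fin r,
      ¬ ∃ l : List V, IsMonoPathList c i.castSucc l ∧ l.length = ℓ i + 1) :
    ∃ P : Fin (∏ i, ℓ i) → Set V,
      (∀ k, IsMonoPathSet c (Fin.last r) (P k)) ∧
      (Pairwise fun a b => Disjoint (P a) (P b)) ∧
      (⋃ k, P k) = Set.univ :=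
  decomposition_countable_general r c ℓ hno
end

section
/- Let T be a finite tournament and c : E(T) → [r] an edge-colouring such that there is no monochromatic directed path of edge-length ℓ_i in colour i for any i ∈ [r]. Then T has at most ∏_{i≤r} ℓ_i vertices. -/
/-!
For each colour `i`, the digraph of `i`-coloured edges has no path with `ℓ i + 1` vertices, so by
the Gallai–Roy theorem it has a proper vertex colouring with `ℓ i` colours: take a maximal
acyclic subdigraph and label each vertex by the length of the longest path in it starting
there. Any two vertices of a tournament are joined by an edge of some colour, so the product
of these colourings is injective into `∏ i, Fin (ℓ i)`.
-/

open Relation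

namespace List

theorem IsChain.nodup_of_acyclic {V : Type*} {S : V → V → Prop} {l : List V}
    (hS : ∀ a, ¬ TransGen S a a) (hl : l.IsChain S) : l.Nodup :=
  ((hl.imp fun _ _ => TransGen.single).pairwise).imp fun {a _} hab => by rintro rfl; exact hS a hab

end List

namespace Relation

variable {V : Type*}

theorem exists_height_of_acyclic [Finite V] {S : V → V → Prop}
    (hS : ∀ a, ¬ TransGen S a a) :
    ∃ h : V → ℕ, (∀ a b, TransGen S a b → h b < h a) ∧
      ∀ v, ∃ t : List V, (v :: t).IsChain S ∧ t.length = h v := by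
  classical
  have := Fintype.ofFinite V
  let P (v : V) (n : ℕ) : Prop := ∃ t : List V, (v :: t).IsChain S ∧ t.length = n
  let h (v : V) : ℕ := Nat.findGreatest (P v) (Fintype.card V)
  have hP : ∀ v, P v (h v) := fun v =>
    Nat.findGreatest_spec (P := P v) (Nat.zero_le _) ⟨[], List.isChain_singleton v, rfl⟩
  have hstep : ∀ a b, S a b → h b < h a := by
    intro a b hab
    obtain ⟨t, ht, hlen⟩ := hP b
    have hchain : (a :: b :: t).IsChain S := List.IsChain.cons_cons hab ht
    have hcard := (hchain.nodup_of_acyclic hS).length_le_card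
    exact Nat.le_findGreatest (by simp only [List.length_cons] at hcard; omega)
      ⟨b :: t, hchain, by simp [hlen]⟩
  refine ⟨h, fun a b hab => ?_, hP⟩
  induction hab with
  | single hab => exact hstep _ _ hab
  | tail _ hbc ih => exact (hstep _ _ hbc).trans ih

theorem transGen_sup_edge {S : V → V → Prop} {u v x y : V}
    (h : TransGen (S ⊔ fun a b => a = u ∧ b = v) x y) :
    TransGen S x y ∨ (ReflTransGen S x u ∧ ReflTransGen S v y) := by
  induction h with
  | single hxy =>
    rcases hxy with hxy | ⟨rfl, rfl⟩
    · exact .inl (.single hxy)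
    · exact .inr ⟨.refl, .refl⟩
  | tail _ hyz ih =>
    rcases ih, hyz with ⟨ih | ⟨hxu, hvy⟩, hyz | ⟨rfl, rfl⟩⟩
    · exact .inl (ih.tail hyz)
    · exact .inr ⟨ih.to_reflTransGen, .refl⟩
    · exact .inr ⟨hxu, hvy.tail hyz⟩
    · exact .inr ⟨hxu, .refl⟩

theorem exists_maximal_acyclic_le [Finite V] (D : V → V → Prop) :
    ∃ S ≤ D, (∀ a, ¬ TransGen S a a) ∧ ∀ u v, D u v → S u v ∨ ReflTransGen S v u := by
  have hbot : ∀ a, ¬ TransGen (⊥ : V → V → Prop) a a := fun a h => by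
    cases h with
    | single h => exact h
    | tail _ h => exact h
  obtain ⟨S, -, hS⟩ := Finite.exists_le_maximal (p := fun S => S ≤ D ∧ ∀ a, ¬ TransGen S a a)
    (a := ⊥) ⟨bot_le, hbot⟩
  refine ⟨S, hS.prop.1, hS.prop.2, fun u v huv => or_iff_not_imp_right.2 fun hvu => ?_⟩
  have hacyclic : ∀ w, ¬ TransGen (S ⊔ fun a b => a = u ∧ b = v) w w := fun w hw =>
    (transGen_sup_edge hw).elim (hS.prop.2 w) fun ⟨hwu, hvw⟩ => hvu (hvw.trans hwu)
  have hle : S ⊔ (fun a b => a = u ∧ b = v) ≤ D :=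
    sup_le hS.prop.1 fun a b ⟨ha, hb⟩ => ha ▸ hb ▸ huv
  exact hS.le_of_ge ⟨hle, hacyclic⟩ le_sup_left u v (.inr ⟨rfl, rfl⟩)

/-- Gallai–Roy theorem. -/
theorem exists_coloring_of_not_exists_nodup_isChain [Finite V] {D : V → V → Prop} {m : ℕ}
    (hD : ¬ ∃ l : List V, l.Nodup ∧ l.IsChain D ∧ l.length = m + 1) :
    ∃ g : V → Fin m, ∀ u v, D u v → u ≠ v → g u ≠ g v := by
  obtain ⟨S, hSD, hS, hmax⟩ := exists_maximal_acyclic_le D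
  obtain ⟨h, hlt, hchain⟩ := exists_height_of_acyclic hS
  have hm : ∀ v, h v < m := fun v => by
    by_contra! hle
    obtain ⟨t, ht, hlen⟩ := hchain v
    refine hD ⟨(v :: t).take (m + 1), ((ht.nodup_of_acyclic hS).sublist
      (List.take_sublist _ _)), (ht.take _).imp fun a b => hSD a b, ?_⟩
    simp only [List.length_take, List.length_cons, hlen]
    omega
  refine ⟨fun v => ⟨h v, hm v⟩, fun u v huv hne hguv => ?_⟩
  have heq : h u = h v := congrArg Fin.val hguv
  rcases hmax u v huv with hSuv | hvu
  · exact (hlt u v (.single hSuv)).ne heq.symm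
  · rcases reflTransGen_iff_eq_or_transGen.1 hvu with rfl | hvu
    · exact hne rfl
    · exact (hlt v u hvu).ne heq

end Relation

theorem Fintype.card_le_prod_of_colorings {ι V : Type*} [Fintype ι] [Fintype V] {m : ι → ℕ}
    (D : ι → V → V → Prop) (g : ∀ i, V → Fin (m i))
    (hg : ∀ i u v, D i u v → u ≠ v → g i u ≠ g i v)
    (hcover : ∀ u v, u ≠ v → ∃ i, D i u v ∨ D i v u) :
    Fintype.card V ≤ ∏ i, m i := by
  classical
  have hinj : Function.Injective fun v i => g i v := fun u v huv => by
    by_contra hne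
    obtain ⟨i, hi | hi⟩ := hcover u v hne
    · exact hg i u v hi hne (congrFun huv i)
    · exact hg i v u hi (Ne.symm hne) (congrFun huv i).symm
  simpa using Fintype.card_le_of_injective _ hinj

theorem tournament_card_le_of_no_long_mono_path_general {V : Type*} [Fintype V]
    (E : V → V → Prop)
    (htour : ∀ u v : V, u ≠ v → (E u v ↔ ¬ E v u))
    (r : ℕ) (c : V → V → Fin r) (ℓ : Fin r → ℕ)
    (hno : ∀ i : Fin r, ¬ ∃ l : List V, l.Nodup ∧
      l.Chain' (fun u v => E u v ∧ c u v = i) ∧ l.length = ℓ i + 1) :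
    Fintype.card V ≤ ∏ i, ℓ i := by
  choose g hg using fun i => Relation.exists_coloring_of_not_exists_nodup_isChain (hno i)
  refine Fintype.card_le_prod_of_colorings _ g hg fun u v huv => ?_
  by_cases he : E u v
  · exact ⟨c u v, .inl ⟨he, rfl⟩⟩
  · exact ⟨c v u, .inr ⟨not_not.1 (mt (htour u v huv).2 he), rfl⟩⟩

/-- A finite tournament `(V, E)` (`E` irreflexive, exactly one direction between any two
distinct vertices), edge-coloured by `c : V → V → Fin r`, with no monochromatic directed
path of edge-length `ℓ i` in colour `i` for any `i`, has at most `∏ i, ℓ i` vertices.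
A directed path is a list of distinct vertices with consecutive directed edges;
its edge-length is `l.length - 1`. -/
theorem tournament_card_le_of_no_long_mono_path {V : Type*} [Fintype V]
    (E : V → V → Prop) (hirr : ∀ v, ¬ E v v)
    (htour : ∀ u v : V, u ≠ v → (E u v ↔ ¬ E v u))
    (r : ℕ) (c : V → V → Fin r) (ℓ : Fin r → ℕ) (hℓ : ∀ i, 0 < ℓ i)
    (hno : ∀ i : Fin r, ¬ ∃ l : List V, l.Nodup ∧
      l.Chain' (fun u v => E u v ∧ c u v = i) ∧ l.length = ℓ i + 1) :
    Fintype.card V ≤ ∏ i, ℓ i :=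
  tournament_card_le_of_no_long_mono_path_general E htour r c ℓ hno
end

section
/- Let c : E(K↔_n) → [r+1] be an edge-colouring of the finite complete symmetric digraph on n vertices. If k is the smallest number of pairwise vertex-disjoint monochromatic directed paths in colour r+1 needed to cover the vertex set of K↔_n, then K↔_n contains as a subgraph a tournament on k vertices all of whose edges have colours in [r]. -/
/-!
The edges of colour `r+1` form a digraph `D`, and two vertices that are independent in `D` are
joined in both directions by edges with colours in `[r]`; ordering an independent set of `D`
linearly therefore gives the required tournament. So the theorem follows from the
Gallai–Milgram theorem: the vertices of `D` can be partitioned into directed paths, at most as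
many as some independent set has elements. If the first vertices of a path partition `P` are not
independent, say `a → b`, delete `a` from its path and use induction on the number of vertices:
either the rest has an independent set of size `|P|`, or it has a partition with fewer paths
whose first vertices are among the old ones. Putting `a` back in front of the path that starts
at its old successor or at `b`, or as a path of its own, gives a partition with fewer paths
than `P`.
-/

namespace GallaiMilgram

open List

variable {V : Type*} {Adj : V → V → Prop}

def heads (P : List (List V)) : List V := P.filterMap head?

structure IsPathPartition (Adj : V → V → Prop) (P : List (List V)) : Prop where
  ne_nil : ∀ l ∈ P, l ≠ []
  isChain : ∀ l ∈ P, l.IsChain Adj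
  nodup : P.flatten.Nodup

section heads

variable {P P' : List (List V)} {a b x : V}

@[simp]
lemma heads_cons_cons (l : List V) (P : List (List V)) : heads ((a :: l) :: P) = a :: heads P :=
  rfl

lemma mem_heads : x ∈ heads P ↔ ∃ l, x :: l ∈ P := by
  simp [heads, head?_eq_some_iff]

lemma heads_sublist_flatten : ∀ P : List (List V), heads P <+ P.flatten
  | [] => .slnil
  | [] :: P => heads_sublist_flatten P
  | (a :: l) :: P => ((heads_sublist_flatten P).trans (sublist_append_right l _)).cons_cons a

lemma _root_.List.Perm.heads (h : P ~ P') : heads P ~ heads P' :=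
  h.filterMap _

lemma exists_perm_of_mem_heads (h : x ∈ heads P) : ∃ l E, P ~ (x :: l) :: E := by
  classical
  obtain ⟨l, hl⟩ := mem_heads.1 h
  exact ⟨l, _, perm_cons_erase hl⟩

lemma exists_perm_of_mem_heads_of_ne (ha : a ∈ heads P) (hb : b ∈ heads P) (hab : a ≠ b) :
    ∃ X Y R, P ~ (a :: X) :: (b :: Y) :: R := by
  obtain ⟨X, E, hP⟩ := exists_perm_of_mem_heads ha
  have hb' : b ∈ heads E := by
    simpa [hab.symm] using hP.heads.subset hb
  obtain ⟨Y, R, hE⟩ := exists_perm_of_mem_heads hb'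
  exact ⟨X, Y, R, hP.trans (hE.cons _)⟩

end heads

variable {P P' Q E : List (List V)} {l : List V} {a a' b z : V}

namespace IsPathPartition

lemma perm (hP : IsPathPartition Adj P) (h : P ~ P') : IsPathPartition Adj P' where
  ne_nil l hl := hP.ne_nil l (h.mem_iff.2 hl)
  isChain l hl := hP.isChain l (h.mem_iff.2 hl)
  nodup := h.flatten.nodup_iff.1 hP.nodup

lemma length_heads (hP : IsPathPartition Adj P) : (heads P).length = P.length := by
  rw [heads, length_filterMap_eq_countP, countP_eq_length]
  intro l hl
  obtain ⟨x, t, rfl⟩ := exists_cons_of_ne_nil (hP.ne_nil l hl)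
  rfl

lemma nodup_heads (hP : IsPathPartition Adj P) : (heads P).Nodup :=
  hP.nodup.sublist (heads_sublist_flatten P)

end IsPathPartition

lemma isPathPartition_cons_iff :
    IsPathPartition Adj (l :: E) ↔
      l ≠ [] ∧ l.IsChain Adj ∧ (l ++ E.flatten).Nodup ∧ IsPathPartition Adj E := by
  refine ⟨fun h ↦ ⟨h.ne_nil _ mem_cons_self, h.isChain _ mem_cons_self, h.nodup,
    fun m hm ↦ h.ne_nil m (mem_cons_of_mem _ hm), fun m hm ↦ h.isChain m (mem_cons_of_mem _ hm),
    h.nodup.of_append_right⟩, fun ⟨hl, hc, hn, hE⟩ ↦ ?_⟩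
  exact ⟨forall_mem_cons.2 ⟨hl, hE.ne_nil⟩, forall_mem_cons.2 ⟨hc, hE.isChain⟩, hn⟩

lemma isPathPartition_cons_cons_iff :
    IsPathPartition Adj ((a :: b :: l) :: E) ↔
      IsPathPartition Adj ((b :: l) :: E) ∧ a ∉ ((b :: l) :: E).flatten ∧ Adj a b := by
  simp only [isPathPartition_cons_iff, isChain_cons_cons, cons_append, nodup_cons, flatten_cons,
    mem_cons, mem_append]
  tauto

lemma isPathPartition_singleton_cons_iff :
    IsPathPartition Adj ([a] :: E) ↔ IsPathPartition Adj E ∧ a ∉ E.flatten := by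
  simp only [isPathPartition_cons_iff, isChain_singleton, cons_append, nil_append, nodup_cons]
  exact ⟨fun ⟨_, _, ⟨ha, _⟩, hE⟩ ↦ ⟨hE, ha⟩,
    fun ⟨hE, ha⟩ ↦ ⟨cons_ne_nil _ _, trivial, ⟨ha, hE.nodup⟩, hE⟩⟩

lemma isPathPartition_map_singleton {L : List V} (hL : L.Nodup) :
    IsPathPartition Adj (L.map fun x ↦ [x]) where
  ne_nil := by simp
  isChain := by simp
  nodup := by simpa [← flatMap_def]

namespace IsPathPartition

lemma exists_cons_of_mem_heads [DecidableEq V] (hQ : IsPathPartition Adj Q)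
    (hz : z ∈ heads Q) (ha : a ∉ Q.flatten) (haz : Adj a z) :
    ∃ Q', IsPathPartition Adj Q' ∧ Q'.flatten ~ a :: Q.flatten ∧ Q'.length = Q.length ∧
      heads Q' ⊆ a :: (heads Q).erase z := by
  obtain ⟨Z, E, hQE⟩ := exists_perm_of_mem_heads hz
  refine ⟨(a :: z :: Z) :: E, isPathPartition_cons_cons_iff.2
      ⟨hQ.perm hQE, fun h ↦ ha (hQE.flatten.mem_iff.2 h), haz⟩,
    (hQE.flatten.cons a).symm, hQE.length_eq.symm, ?_⟩
  rw [heads_cons_cons]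
  refine cons_subset_cons _ fun x hx ↦ ?_
  have hnd := (hQ.perm hQE).nodup_heads
  rw [heads_cons_cons, nodup_cons] at hnd
  rw [hQ.nodup_heads.mem_erase_iff]
  exact ⟨fun h ↦ hnd.1 (h ▸ hx), hQE.heads.mem_iff.2 (mem_cons_of_mem _ hx)⟩

lemma exists_cons_of_heads_subset {H : List V} (hQ : IsPathPartition Adj Q)
    (ha : a ∉ Q.flatten) (haa' : Adj a a') (hab : Adj a b) (hQH : heads Q ⊆ a' :: b :: H)
    (hQlen : Q.length < H.length + 2) :
    ∃ Q', IsPathPartition Adj Q' ∧ Q'.flatten ~ a :: Q.flatten ∧ Q'.length < H.length + 2 ∧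
      heads Q' ⊆ a :: b :: H := by
  classical
  by_cases ha' : a' ∈ heads Q
  · obtain ⟨Q', hQ', hflat, hlen, hheads⟩ := hQ.exists_cons_of_mem_heads ha' ha haa'
    refine ⟨Q', hQ', hflat, hlen ▸ hQlen,
      List.Subset.trans hheads (cons_subset_cons _ fun x hx ↦ ?_)⟩
    rw [hQ.nodup_heads.mem_erase_iff] at hx
    exact (mem_cons.1 (hQH hx.2)).resolve_left hx.1
  by_cases hb' : b ∈ heads Q
  · obtain ⟨Q', hQ', hflat, hlen, hheads⟩ := hQ.exists_cons_of_mem_heads hb' ha hab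
    refine ⟨Q', hQ', hflat, hlen ▸ hQlen,
      List.Subset.trans hheads (cons_subset_cons _ fun x hx ↦ ?_)⟩
    rw [hQ.nodup_heads.mem_erase_iff] at hx
    have hx' := hQH hx.2
    have : x ≠ a' := fun h ↦ ha' (h ▸ hx.2)
    simp_all
  · have hH : heads Q ⊆ H := fun x hx ↦ by
      have hx' := hQH hx
      have : x ≠ a' := fun h ↦ ha' (h ▸ hx)
      have : x ≠ b := fun h ↦ hb' (h ▸ hx)
      simp_all
    have hlen : Q.length ≤ H.length := hQ.length_heads ▸ (hQ.nodup_heads.subperm hH).length_le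
    refine ⟨[a] :: Q, isPathPartition_singleton_cons_iff.2 ⟨hQ, ha⟩, by simp, ?_, ?_⟩
    · simp only [length_cons]
      omega
    · exact cons_subset_cons _ (List.Subset.trans hH (subset_cons_self _ _))

theorem exists_indep_or_exists_shorter {P : List (List V)} (hP : IsPathPartition Adj P) :
    (∃ I : Finset V, I.card = P.length ∧ (∀ x ∈ I, x ∈ P.flatten) ∧
      (I : Set V).Pairwise fun u v ↦ ¬ Adj u v) ∨
    ∃ Q, IsPathPartition Adj Q ∧ Q.flatten ~ P.flatten ∧ Q.length < P.length ∧
      heads Q ⊆ heads P := by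
  classical
  by_cases hind : ((heads P).toFinset : Set V).Pairwise fun u v ↦ ¬ Adj u v
  · refine .inl ⟨_, ?_, fun x hx ↦ (heads_sublist_flatten P).subset (mem_toFinset.1 hx), hind⟩
    rw [toFinset_card_of_nodup hP.nodup_heads, hP.length_heads]
  obtain ⟨a, ha, b, hb, hab, hadj⟩ : ∃ a ∈ heads P, ∃ b ∈ heads P, a ≠ b ∧ Adj a b := by
    simpa [Set.Pairwise] using hind
  obtain ⟨X, Y, R, hperm⟩ := exists_perm_of_mem_heads_of_ne ha hb hab
  have hP₁ := hP.perm hperm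
  have hheads : a :: b :: heads R ⊆ heads P := fun x hx ↦
    hperm.heads.mem_iff.2 (by simpa using hx)
  have hlen : P.length = R.length + 2 := by simpa using hperm.length_eq
  match X with
  | [] =>
    obtain ⟨hYR, haYR⟩ := isPathPartition_singleton_cons_iff.1 hP₁
    exact .inr ⟨(a :: b :: Y) :: R, isPathPartition_cons_cons_iff.2 ⟨hYR, haYR, hadj⟩,
      by simpa using hperm.flatten.symm, by simp [hlen],
      List.Subset.trans (cons_subset_cons a (subset_cons_self b _)) hheads⟩
  | a' :: X =>
    obtain ⟨hP', haP', haa'⟩ := isPathPartition_cons_cons_iff.1 hP₁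
    have hflat : P.flatten ~ a :: ((a' :: X) :: (b :: Y) :: R).flatten := by
      simpa using hperm.flatten
    rcases hP'.exists_indep_or_exists_shorter with
      ⟨I, hIcard, hIsub, hI⟩ | ⟨Q, hQ, hQflat, hQlen, hQheads⟩
    · exact .inl ⟨I, by simp [hIcard, hlen],
        fun x hx ↦ hflat.mem_iff.2 (mem_cons_of_mem _ (hIsub x hx)), hI⟩
    · have hlenR : (heads R).length = R.length := by
        have := hperm.heads.length_eq
        simp only [hP.length_heads, hlen, heads_cons_cons, length_cons] at this
        omega
      obtain ⟨Q', hQ', hQ'flat, hQ'len, hQ'heads⟩ := exists_cons_of_heads_subset hQ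
        (fun h ↦ haP' (hQflat.mem_iff.1 h)) haa' hadj (by simpa using hQheads)
        (by rw [hlenR]; exact hQlen)
      exact .inr ⟨Q', hQ', hQ'flat.trans ((hQflat.cons a).trans hflat.symm), by omega,
        List.Subset.trans hQ'heads hheads⟩
termination_by P.flatten.length
decreasing_by simp [hflat.length_eq]

theorem gallai_milgram {P : List (List V)} (hP : IsPathPartition Adj P) :
    ∃ Q, IsPathPartition Adj Q ∧ Q.flatten ~ P.flatten ∧ ∃ I : Finset V, I.card = Q.length ∧
      (∀ x ∈ I, x ∈ P.flatten) ∧ (I : Set V).Pairwise fun u v ↦ ¬ Adj u v := by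
  rcases hP.exists_indep_or_exists_shorter with ⟨I, hI, hIP, hind⟩ | ⟨Q, hQ, hQP, hQlen, -⟩
  · exact ⟨P, hP, .refl _, I, hI, hIP, hind⟩
  · obtain ⟨Q', hQ', hQ'Q, I, hI, hIQ, hind⟩ := hQ.gallai_milgram
    exact ⟨Q', hQ', hQ'Q.trans hQP, I, hI, fun x hx ↦ hQP.mem_iff.1 (hIQ x hx), hind⟩
termination_by P.length

end IsPathPartition

end GallaiMilgram

open GallaiMilgram List in
lemma exists_monoPathSet_cover {V : Type*} {N : ℕ} {c : V → V → Fin N} {j : Fin N}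
    {Q : List (List V)} (hQ : IsPathPartition (fun u v ↦ c u v = j) Q)
    (hcov : ∀ x, x ∈ Q.flatten) :
    ∃ P : Fin Q.length → Set V, (∀ i, IsMonoPathSet c j (P i)) ∧
      (Pairwise fun a b ↦ Disjoint (P a) (P b)) ∧ ⋃ i, P i = Set.univ := by
  obtain ⟨hnodup, hdisj⟩ := nodup_flatten.1 hQ.nodup
  refine ⟨fun i ↦ {x | x ∈ Q.get i},
    fun i ↦ .inl ⟨Q.get i, ⟨hnodup _ (get_mem _ _), hQ.isChain _ (get_mem _ _)⟩, rfl⟩,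
    fun i i' hii' ↦ ?_, Set.eq_univ_of_forall fun x ↦ ?_⟩
  · rcases hii'.lt_or_gt with h | h
    · exact Set.disjoint_left.2 fun x h₁ h₂ ↦ hdisj.rel_get_of_lt h h₁ h₂
    · exact Set.disjoint_left.2 fun x h₁ h₂ ↦ hdisj.rel_get_of_lt h h₂ h₁
  · obtain ⟨l, hl, hx⟩ := mem_flatten.1 (hcov x)
    obtain ⟨i, rfl⟩ := get_of_mem hl
    exact Set.mem_iUnion.2 ⟨i, hx⟩

lemma exists_tournament_of_pairwise {V : Type*} [LinearOrder V] {N : ℕ} (c : V → V → Fin N)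
    (j : Fin N) {S : Finset V} (hS : (S : Set V).Pairwise fun u v ↦ c u v ≠ j) :
    ∃ E : V → V → Prop, (∀ u v, E u v → u ∈ S ∧ v ∈ S ∧ c u v ≠ j) ∧ (∀ v, ¬ E v v) ∧
      ∀ u ∈ S, ∀ v ∈ S, u ≠ v → (E u v ↔ ¬ E v u) := by
  refine ⟨fun u v ↦ u ∈ S ∧ v ∈ S ∧ u < v, fun u v ⟨hu, hv, huv⟩ ↦ ⟨hu, hv, hS hu hv huv.ne⟩,
    fun v ⟨_, _, hvv⟩ ↦ hvv.false, fun u hu v hv huv ↦ ?_⟩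
  simp only [hu, hv, true_and, not_lt]
  exact ⟨le_of_lt, fun h ↦ h.lt_of_ne huv⟩

/-- Let `c` be an `(r+1)`-edge-colouring of the finite complete symmetric digraph on `n`
vertices. If `k` is the smallest number of pairwise disjoint monochromatic directed paths in
colour `r+1` needed to cover the vertex set, then the digraph contains a tournament on `k`
vertices all of whose edges have colours in `[r]` (i.e. colour `≠ r+1`) as a subgraph. -/
theorem subtournament_of_min_cover (n r k : ℕ) (c : Fin n → Fin n → Fin (r + 1))
    (hk : IsLeast {m : ℕ | ∃ P : Fin m → Set (Fin n),
      (∀ j, IsMonoPathSet c (Fin.last r) (P j)) ∧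
      (Pairwise fun a b => Disjoint (P a) (P b)) ∧
      (⋃ j, P j) = Set.univ} k) :
    ∃ S : Finset (Fin n), S.card = k ∧ ∃ E : Fin n → Fin n → Prop,
      (∀ u v, E u v → u ∈ S ∧ v ∈ S ∧ c u v ≠ Fin.last r) ∧
      (∀ v, ¬ E v v) ∧
      (∀ u ∈ S, ∀ v ∈ S, u ≠ v → (E u v ↔ ¬ E v u)) := by
  obtain ⟨Q, hQ, hQflat, I, hIcard, -, hI⟩ :=
    (GallaiMilgram.isPathPartition_map_singleton (Adj := fun u v ↦ c u v = Fin.last r)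
      (Finset.univ : Finset (Fin n)).nodup_toList).gallai_milgram
  have hkQ : k ≤ Q.length :=
    hk.2 (exists_monoPathSet_cover hQ fun x ↦ hQflat.mem_iff.2 (by simp))
  obtain ⟨S, hSI, hScard⟩ := Finset.exists_subset_card_eq (hIcard ▸ hkQ)
  exact ⟨S, hScard, exists_tournament_of_pairwise c _ (hI.mono (Finset.coe_subset.2 hSI))⟩
end

section
/- Every countable strongly <ℵ₀-connected digraph can be covered by a single one-way infinite directed path, i.e. there is a directed path (finite, or one-way infinite) whose vertex set is the whole vertex set of the digraph. -/
/-!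
Enumerate the vertices as `e 0, e 1, …` and grow a directed path, step `n` appending a path
from its current last vertex to `e n`. Such a detour exists because infinitely many internally
disjoint paths lead there, while the finitely many vertices already used meet the interiors of
only finitely many of them. The resulting paths extend one another, so either they stabilise
at a finite path through every vertex or their union is a one-way infinite path.
-/

/-- A digraph `(V, E)` is strongly `<ℵ₀`-connected if for every two distinct vertices `v`
and `w` there are infinitely many pairwise internally vertex-disjoint directed paths from
`v` to `w` (and hence, by symmetry of the quantifier, also from `w` to `v`). Here a
directed path from `v` to `w` is a list of distinct vertices starting at `v`, ending at
`w`, with consecutive directed edges; the family `P` consists of pairwise distinct paths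
any two of which meet only in `v` and `w`. -/
def StronglyCofinConnected {V : Type*} (E : V → V → Prop) : Prop :=
  ∀ v w : V, v ≠ w → ∃ P : ℕ → List V,
    (∀ n, (P n).Nodup ∧ (P n).Chain' E ∧ (P n).head? = some v ∧ (P n).getLast? = some w) ∧
    (∀ m n, m ≠ n → P m ≠ P n ∧ ∀ x, x ∈ P m → x ∈ P n → x = v ∨ x = w)

namespace List

variable {α : Type*}

theorem exists_prefix_seq_mem {p : List α → Prop} (h_nil : p [])
    (h_ext : ∀ l, p l → ∀ a, ∃ l', p l' ∧ l <+: l' ∧ a ∈ l') (e : ℕ → α) :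
    ∃ L : ℕ → List α, (∀ n, p (L n)) ∧ (∀ n, L n <+: L (n + 1)) ∧ ∀ n, e n ∈ L (n + 1) := by
  choose g hg using h_ext
  let S : ℕ → {l // p l} :=
    fun n => Nat.rec ⟨[], h_nil⟩ (fun n l => ⟨g l.1 l.2 (e n), (hg _ _ _).1⟩) n
  exact ⟨fun n => (S n).1, fun n => (S n).2, fun n => (hg _ _ _).2.1, fun n => (hg _ _ _).2.2⟩

section PrefixSeq

variable {L : ℕ → List α}

theorem prefix_of_le_of_prefix_succ (hL : ∀ n, L n <+: L (n + 1)) {m n : ℕ} (hmn : m ≤ n) :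
    L m <+: L n :=
  Nat.rel_of_forall_rel_succ_of_le (· <+: ·) hL hmn

theorem exists_forall_prefix_of_bddAbove_length (hL : ∀ n, L n <+: L (n + 1))
    (hb : BddAbove (Set.range fun n => (L n).length)) : ∃ N, ∀ n, L n <+: L N := by
  obtain ⟨_, ⟨N, rfl⟩, hN⟩ :=
    Set.exists_max_image _ id hb.finite (Set.range_nonempty fun n => (L n).length)
  refine ⟨N, fun n => ?_⟩
  exact prefix_of_prefix_length_le (prefix_of_le_of_prefix_succ hL (le_max_left n N))
    (prefix_of_le_of_prefix_succ hL (le_max_right n N)) (hN _ ⟨n, rfl⟩)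

theorem exists_getElem_eq_of_prefix_succ (hL : ∀ n, L n <+: L (n + 1))
    (hu : ∀ k, ∃ n, k < (L n).length) :
    ∃ f : ℕ → α, ∀ n k (hk : k < (L n).length), (L n)[k] = f k := by
  choose N hN using hu
  refine ⟨fun k => (L (N k))[k]'(hN k), fun n k hk => ?_⟩
  rcases le_total n (N k) with hle | hle
  · exact (prefix_of_le_of_prefix_succ hL hle).getElem hk
  · exact ((prefix_of_le_of_prefix_succ hL hle).getElem (hN k)).symm

variable {f : ℕ → α}

theorem injective_of_getElem_eq (hu : ∀ k, ∃ n, k < (L n).length) (hnd : ∀ n, (L n).Nodup)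
    (hf : ∀ n k (hk : k < (L n).length), (L n)[k] = f k) : Function.Injective f := by
  choose N hN using hu
  intro i j hij
  have hi : i < (L (N (max i j))).length := (le_max_left i j).trans_lt (hN _)
  have hj : j < (L (N (max i j))).length := (le_max_right i j).trans_lt (hN _)
  rw [← hf _ i hi, ← hf _ j hj] at hij
  exact (hnd _).getElem_inj_iff.mp hij

theorem rel_succ_of_getElem_eq {R : α → α → Prop} (hu : ∀ k, ∃ n, k < (L n).length)
    (hR : ∀ n, (L n).IsChain R) (hf : ∀ n k (hk : k < (L n).length), (L n)[k] = f k) (k : ℕ) :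
    R (f k) (f (k + 1)) := by
  obtain ⟨n, hn⟩ := hu (k + 1)
  rw [← hf n k (by omega), ← hf n (k + 1) hn]
  exact isChain_iff_getElem.mp (hR n) k hn

theorem mem_range_of_getElem_eq (hf : ∀ n k (hk : k < (L n).length), (L n)[k] = f k)
    {n : ℕ} {a : α} (ha : a ∈ L n) : a ∈ Set.range f := by
  obtain ⟨k, hk, rfl⟩ := getElem_of_mem ha
  exact ⟨k, (hf n k hk).symm⟩

end PrefixSeq

end List

namespace StronglyCofinConnected

variable {V : Type*} {E : V → V → Prop}

theorem exists_path_avoiding (h : StronglyCofinConnected E) {v w : V} (hvw : v ≠ w) {S : Set V}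
    (hS : S.Finite) : ∃ p : List V, p.Nodup ∧ p.IsChain E ∧ p.head? = some v ∧
      p.getLast? = some w ∧ ∀ x ∈ p, x ∈ S → x = v ∨ x = w := by
  obtain ⟨P, hP, hdisj⟩ := h v w hvw
  -- an interior vertex lies on at most one of the paths `P n`
  have hbad : {n | ∃ x ∈ P n, x ∈ S ∧ ¬(x = v ∨ x = w)}.Finite := by
    refine (hS.biUnion fun x _ => Set.Subsingleton.finite
      (s := {n | x ∈ P n ∧ ¬(x = v ∨ x = w)}) ?_).subset ?_
    · rintro m ⟨hm, hx⟩ n ⟨hn, -⟩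
      by_contra hmn
      exact hx ((hdisj m n hmn).2 x hm hn)
    · rintro n ⟨x, hxP, hxS, hx⟩
      exact Set.mem_biUnion hxS ⟨hxP, hx⟩
  obtain ⟨n, hn⟩ := hbad.infinite_compl.nonempty
  obtain ⟨hnd, hch, hhead, hlast⟩ := hP n
  refine ⟨P n, hnd, hch, hhead, hlast, fun x hxP hxS => ?_⟩
  by_contra hx
  exact hn ⟨x, hxP, hxS, hx⟩

theorem exists_extension (h : StronglyCofinConnected E) {l : List V} (hnd : l.Nodup)
    (hch : l.IsChain E) (w : V) : ∃ l', l'.Nodup ∧ l'.IsChain E ∧ l <+: l' ∧ w ∈ l' := by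
  by_cases hw : w ∈ l
  · exact ⟨l, hnd, hch, List.prefix_refl l, hw⟩
  rcases hlast : l.getLast? with _ | a
  · rw [List.getLast?_eq_none_iff] at hlast
    subst hlast
    exact ⟨[w], List.nodup_singleton w, List.isChain_singleton w, List.nil_prefix, by simp⟩
  have haw : a ≠ w := fun haw => hw (haw ▸ List.mem_of_getLast? hlast)
  obtain ⟨p, hpnd, hpch, hphead, hplast, hpl⟩ := h.exists_path_avoiding haw (List.finite_toSet l)
  obtain ⟨t, rfl⟩ := List.head?_eq_some_iff.mp hphead
  rw [List.nodup_cons] at hpnd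
  rw [List.isChain_cons] at hpch
  have hwt : w ∈ t := (List.mem_cons.mp (List.mem_of_getLast? hplast)).resolve_left haw.symm
  refine ⟨l ++ t, ?_, ?_, List.prefix_append l t, List.mem_append_right l hwt⟩
  · refine List.nodup_append.mpr ⟨hnd, hpnd.2, ?_⟩
    rintro x hxl _ hxt rfl
    rcases hpl x (List.mem_cons_of_mem a hxt) hxl with rfl | rfl
    exacts [hpnd.1 hxt, hw hxl]
  · refine List.isChain_append.mpr ⟨hch, hpch.2, ?_⟩
    rintro x hx y hy
    rw [hlast, Option.mem_some_iff] at hx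
    exact hx ▸ hpch.1 y hy

end StronglyCofinConnected

/-- Every countable non-trivial strongly `<ℵ₀`-connected digraph can be covered by a single
one-way infinite directed path: there is a directed path (finite, or one-way infinite)
whose vertex set is the whole vertex set. -/
theorem covered_by_single_path_of_stronglyCofinConnected {V : Type*} [Countable V]
    [Nontrivial V] (E : V → V → Prop) (h : StronglyCofinConnected E) :
    (∃ l : List V, l.Nodup ∧ l.Chain' E ∧ {x | x ∈ l} = Set.univ) ∨
    (∃ f : ℕ → V, Function.Injective f ∧ (∀ n, E (f n) (f (n + 1))) ∧
      Set.range f = Set.univ) := by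
  obtain ⟨e, he⟩ := exists_surjective_nat V
  obtain ⟨L, hpath, hpre, hmem⟩ := List.exists_prefix_seq_mem
    (p := fun l => l.Nodup ∧ l.IsChain E) ⟨List.nodup_nil, List.isChain_nil⟩
    (fun l hl w => (h.exists_extension hl.1 hl.2 w).imp fun _ h' => ⟨⟨h'.1, h'.2.1⟩, h'.2.2⟩) e
  have hcover : ∀ v, ∃ n, v ∈ L n := fun v =>
    let ⟨n, hn⟩ := he v; ⟨n + 1, hn ▸ hmem n⟩
  by_cases hb : BddAbove (Set.range fun n => (L n).length)
  · obtain ⟨N, hN⟩ := List.exists_forall_prefix_of_bddAbove_length hpre hb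
    refine .inl ⟨L N, (hpath N).1, (hpath N).2, Set.eq_univ_of_forall fun v => ?_⟩
    obtain ⟨n, hn⟩ := hcover v
    exact (hN n).subset hn
  · have hu : ∀ k, ∃ n, k < (L n).length := by
      simpa only [not_bddAbove_iff, Set.exists_range_iff] using hb
    obtain ⟨f, hf⟩ := List.exists_getElem_eq_of_prefix_succ hpre hu
    refine .inr ⟨f, List.injective_of_getElem_eq hu (fun n => (hpath n).1) hf,
      List.rel_succ_of_getElem_eq hu (fun n => (hpath n).2) hf,
      Set.eq_univ_of_forall fun v => ?_⟩
    obtain ⟨n, hn⟩ := hcover v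
    exact List.mem_range_of_getElem_eq hf hn
end

section
/- For every edge-colouring c : E(K↔_ℕ) → [r+1] of the complete symmetric digraph on ℕ such that there is no monochromatic directed path of edge-length ℓ_i in colour i for any i ∈ [r], there is a finite partition 𝒰 of ℕ such that for every partition class U ∈ 𝒰 with |U| ≥ 2, the subgraph induced on U by the edges of colour r+1 is strongly <ℵ₀-connected. -/
/-! Rank each vertex `u`, for every colour `i ∈ [r]`, by the edge-lengths of longest colour-`i`
paths ending and starting at `u`; these are `< ℓ i`, so there are finitely many rank vectors.
If `v → x` has colour `i` and `x` has the same end-rank as `v`, then `x` lies on a fixed longest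
path ending at `v`, since otherwise appending `x` would raise the end-rank of `x`. So within a
class of equal rank vectors every `v` has only finitely many out-neighbours, and every `w`
finitely many in-neighbours, not joined to it in colour `r + 1`. Partition `ℕ` into the infinite
classes and singletons (the finite classes cover only finitely many vertices); in an infinite
class, infinitely many `x` give paths `v → x → w` of colour `r + 1`. -/

open Function Set

section MonoPaths

variable {V : Type*} {N : ℕ} (c : V → V → Fin N) (j : Fin N) (n : ℕ)

theorem isMonoPathList_swap_iff {l : List V} :
    IsMonoPathList (swap c) j l ↔ IsMonoPathList c j l.reverse := by
  simp only [IsMonoPathList, List.nodup_reverse]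
  exact and_congr_right fun _ => List.isChain_reverse.symm

theorem IsMonoPathList.append_singleton {c : V → V → Fin N} {j : Fin N} {l : List V} {v x : V}
    (hl : IsMonoPathList c j l) (hlast : l.getLast? = some v) (hvx : c v x = j) (hx : x ∉ l) :
    IsMonoPathList c j (l ++ [x]) :=
  ⟨List.nodup_append.2 ⟨hl.1, List.nodup_singleton x, fun _ ha _ hb => by
      rintro rfl; exact hx (List.mem_singleton.1 hb ▸ ha)⟩,
    List.isChain_append.2 ⟨hl.2, List.isChain_singleton x, by simp [hlast, hvx]⟩⟩

open Classical in
noncomputable def endRank (u : V) : ℕ :=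
  Nat.findGreatest (fun k => ∃ l, IsMonoPathList c j l ∧ l.getLast? = some u ∧ l.length = k + 1) n

variable {c j n}

open Classical in
theorem le_endRank {u : V} {k : ℕ} {l : List V} (hk : k ≤ n) (hl : IsMonoPathList c j l)
    (hlast : l.getLast? = some u) (hlen : l.length = k + 1) : k ≤ endRank c j n u :=
  Nat.le_findGreatest hk ⟨l, hl, hlast, hlen⟩

open Classical in
theorem exists_isMonoPathList_length_endRank (u : V) :
    ∃ l, IsMonoPathList c j l ∧ l.getLast? = some u ∧ l.length = endRank c j n u + 1 :=
  Nat.findGreatest_spec (P := fun k => ∃ l, IsMonoPathList c j l ∧ l.getLast? = some u ∧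
    l.length = k + 1) (Nat.zero_le n)
    ⟨[u], ⟨List.nodup_singleton u, List.isChain_singleton u⟩, rfl, rfl⟩

theorem endRank_le (u : V) : endRank c j n u ≤ n := by
  classical
  exact Nat.findGreatest_le n

theorem endRank_lt (hno : ¬ ∃ l, IsMonoPathList c j l ∧ l.length = n + 1) (u : V) :
    endRank c j n u < n := by
  obtain ⟨l, hl, -, hlen⟩ := exists_isMonoPathList_length_endRank (c := c) (j := j) (n := n) u
  exact (endRank_le u).lt_of_ne fun h => hno ⟨l, hl, h ▸ hlen⟩

theorem finite_setOf_endRank_eq (hno : ¬ ∃ l, IsMonoPathList c j l ∧ l.length = n + 1)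
    (v : V) : {x | c v x = j ∧ endRank c j n x = endRank c j n v}.Finite := by
  obtain ⟨l, hl, hlast, hlen⟩ := exists_isMonoPathList_length_endRank (c := c) (j := j) (n := n) v
  refine l.finite_toSet.subset fun x ⟨hvx, hrank⟩ => ?_
  by_contra hx
  have hle := le_endRank (u := x) (endRank_lt hno v) (hl.append_singleton hlast hvx hx) (by simp)
    (by simp [hlen])
  omega

theorem finite_setOf_endRank_swap_eq (hno : ¬ ∃ l, IsMonoPathList c j l ∧ l.length = n + 1)
    (w : V) : {x | c x w = j ∧ endRank (swap c) j n x = endRank (swap c) j n w}.Finite :=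
  finite_setOf_endRank_eq (fun ⟨l, hl, hlen⟩ =>
    hno ⟨l.reverse, (isMonoPathList_swap_iff c j).1 hl, (List.length_reverse).trans hlen⟩) w

end MonoPaths

theorem stronglyCofinConnected_of_finite_nonadj {V : Type*} [Infinite V] {E : V → V → Prop}
    (hout : ∀ v, {x | ¬ E v x}.Finite) (hin : ∀ w, {x | ¬ E x w}.Finite) :
    StronglyCofinConnected E := by
  intro v w hvw
  set S := {x | x ≠ v ∧ x ≠ w ∧ E v x ∧ E x w}
  have hS : S.Infinite := by
    refine ((((finite_singleton v).union (finite_singleton w)).union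
      ((hout v).union (hin w))).infinite_compl).mono fun x hx => ?_
    simp only [mem_compl_iff, mem_union, mem_singleton_iff, not_or] at hx
    exact ⟨hx.1.1, hx.1.2, not_not.1 hx.2.1, not_not.1 hx.2.2⟩
  let m : ℕ ↪ S := hS.natEmbedding
  have hm : ∀ k l, (m k : V) = m l → k = l := fun k l h => m.injective (Subtype.ext h)
  refine ⟨fun k => [v, m k, w], fun k => ?_, fun k l hkl => ⟨fun h => hkl ?_, fun x hk hl => ?_⟩⟩
  · obtain ⟨hv, hw, hvm, hmw⟩ := (m k).2
    refine ⟨by simp [hvw, hv.symm, hw], ?_, rfl, rfl⟩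
    exact List.isChain_cons_cons.2 ⟨hvm, List.isChain_pair.2 hmw⟩
  · simp only [List.cons.injEq, and_true, true_and] at h
    exact hm k l h
  · simp only [List.mem_cons, List.not_mem_nil, or_false] at hk hl
    grind

section Partition

variable {α β γ : Type*}

theorem exists_finset_partition_into_fibres (f : α → γ) (hf : (range f).Finite) :
    ∃ 𝒰 : Finset (Set α), (∀ U ∈ 𝒰, U.Nonempty) ∧
      (∀ U ∈ 𝒰, ∀ U' ∈ 𝒰, U ≠ U' → Disjoint U U') ∧ (⋃ U ∈ 𝒰, U) = univ ∧
      ∀ U ∈ 𝒰, ∃ z, U = f ⁻¹' {z} := by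
  classical
  refine ⟨hf.toFinset.image fun z => f ⁻¹' {z}, ?_, ?_, ?_, ?_⟩
  · simp only [Finset.mem_image, Finite.mem_toFinset, forall_exists_index, and_imp]
    rintro _ _ ⟨x, rfl⟩ rfl
    exact ⟨x, rfl⟩
  · simp only [Finset.mem_image, forall_exists_index, and_imp]
    rintro _ z - rfl _ z' - rfl hne
    exact (disjoint_singleton.2 fun h : z = z' => hne (h ▸ rfl)).preimage f
  · refine eq_univ_of_forall fun x => mem_biUnion (x := f ⁻¹' {f x}) ?_ rfl
    simp
  · simp only [Finset.mem_image, forall_exists_index, and_imp]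
    rintro _ z - rfl
    exact ⟨z, rfl⟩

open Classical in
/-- Refines the fibres of `t`: a point of a finite fibre is put in a class of its own. -/
noncomputable def fibreLabel (t : α → β) (u : α) : β ⊕ α :=
  if (t ⁻¹' {t u}).Infinite then .inl (t u) else .inr u

variable {t : α → β}

theorem finite_range_fibreLabel (ht : (range t).Finite) : (range (fibreLabel t)).Finite := by
  have hfin : {u | (t ⁻¹' {t u}).Finite}.Finite :=
    (ht.subset inter_subset_right).preimage' (fun τ hτ => hτ.1) |>.subset fun u hu => ⟨hu, u, rfl⟩
  refine ((ht.image Sum.inl).union (hfin.image Sum.inr)).subset ?_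
  rintro _ ⟨u, rfl⟩
  unfold fibreLabel
  split_ifs with h
  · exact Or.inl ⟨t u, ⟨u, rfl⟩, rfl⟩
  · exact Or.inr ⟨u, not_infinite.1 h, rfl⟩

theorem subsingleton_fibreLabel_preimage_inr (u : α) :
    (fibreLabel t ⁻¹' {.inr u}).Subsingleton := by
  refine (subsingleton_singleton (a := u)).anti fun x (hx : fibreLabel t x = .inr u) => ?_
  unfold fibreLabel at hx
  split_ifs at hx
  exact Sum.inr_injective hx

theorem fibreLabel_preimage_inl {τ : β} (h : (fibreLabel t ⁻¹' {.inl τ}).Nonempty) :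
    fibreLabel t ⁻¹' {.inl τ} = t ⁻¹' {τ} ∧ (t ⁻¹' {τ}).Infinite := by
  obtain ⟨x, hx : fibreLabel t x = .inl τ⟩ := h
  unfold fibreLabel at hx
  split_ifs at hx with hinf
  obtain rfl := Sum.inl_injective hx
  refine ⟨Subset.antisymm (fun y (hy : fibreLabel t y = .inl (t x)) => ?_)
    fun y (hy : t y = t x) => ?_, hinf⟩
  · unfold fibreLabel at hy
    split_ifs at hy
    exact Sum.inl_injective hy
  · simp [fibreLabel, hy, hinf]

theorem exists_finset_partition_into_infinite_fibres_or_singletons (ht : (range t).Finite) :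
    ∃ 𝒰 : Finset (Set α), (∀ U ∈ 𝒰, U.Nonempty) ∧
      (∀ U ∈ 𝒰, ∀ U' ∈ 𝒰, U ≠ U' → Disjoint U U') ∧ (⋃ U ∈ 𝒰, U) = univ ∧
      ∀ U ∈ 𝒰, U.Nontrivial → U.Infinite ∧ ∃ τ, U = t ⁻¹' {τ} := by
  obtain ⟨𝒰, hne, hdisj, hcover, hfibre⟩ :=
    exists_finset_partition_into_fibres _ (finite_range_fibreLabel ht)
  refine ⟨𝒰, hne, hdisj, hcover, fun U hU hUnt => ?_⟩
  obtain ⟨τ | u, rfl⟩ := hfibre U hU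
  · obtain ⟨heq, hinf⟩ := fibreLabel_preimage_inl hUnt.nonempty
    exact ⟨heq ▸ hinf, τ, heq⟩
  · exact absurd (subsingleton_fibreLabel_preimage_inr u) hUnt.not_subsingleton

end Partition

section Colouring

variable {V : Type*} {r : ℕ} {c : V → V → Fin (r + 1)} {ℓ : Fin r → ℕ}

noncomputable def rankVector (c : V → V → Fin (r + 1)) (ℓ : Fin r → ℕ) (u : V) :
    Fin r → ℕ × ℕ :=
  fun i => (endRank c i.castSucc (ℓ i) u, endRank (swap c) i.castSucc (ℓ i) u)

theorem finite_range_rankVector : (range (rankVector c ℓ)).Finite := by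
  refine (Finite.pi fun i => (finite_Iic (ℓ i)).prod (finite_Iic (ℓ i))).subset ?_
  rintro _ ⟨u, rfl⟩ i -
  exact ⟨endRank_le u, endRank_le u⟩

theorem finite_setOf_rankVector_eq_and_ne_last_out (hno : ∀ i : Fin r,
      ¬ ∃ l : List V, IsMonoPathList c i.castSucc l ∧ l.length = ℓ i + 1) (v : V) :
    {x | rankVector c ℓ x = rankVector c ℓ v ∧ c v x ≠ Fin.last r}.Finite := by
  refine (finite_iUnion fun i => finite_setOf_endRank_eq (hno i) v).subset ?_
  rintro x ⟨hrank, hne⟩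
  obtain ⟨i, hi⟩ := Fin.exists_castSucc_eq.2 hne
  exact mem_iUnion.2 ⟨i, hi.symm, congrArg Prod.fst (congrFun hrank i)⟩

theorem finite_setOf_rankVector_eq_and_ne_last_in (hno : ∀ i : Fin r,
      ¬ ∃ l : List V, IsMonoPathList c i.castSucc l ∧ l.length = ℓ i + 1) (w : V) :
    {x | rankVector c ℓ x = rankVector c ℓ w ∧ c x w ≠ Fin.last r}.Finite := by
  refine (finite_iUnion fun i => finite_setOf_endRank_swap_eq (hno i) w).subset ?_
  rintro x ⟨hrank, hne⟩
  obtain ⟨i, hi⟩ := Fin.exists_castSucc_eq.2 hne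
  exact mem_iUnion.2 ⟨i, hi.symm, congrArg Prod.snd (congrFun hrank i)⟩

theorem stronglyCofinConnected_of_subset_rankVector_preimage (hno : ∀ i : Fin r,
      ¬ ∃ l : List V, IsMonoPathList c i.castSucc l ∧ l.length = ℓ i + 1)
    {U : Set V} (hU : U.Infinite) {τ : Fin r → ℕ × ℕ} (hUτ : U ⊆ rankVector c ℓ ⁻¹' {τ}) :
    StronglyCofinConnected fun x y : U => c x y = Fin.last r := by
  have : Infinite U := hU.to_subtype
  have hrank : ∀ x y : U, rankVector c ℓ x = rankVector c ℓ y := fun x y =>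
    (hUτ x.2).trans (hUτ y.2).symm
  refine stronglyCofinConnected_of_finite_nonadj (fun v => ?_) (fun w => ?_)
  · exact ((finite_setOf_rankVector_eq_and_ne_last_out hno v).preimage
      Subtype.val_injective.injOn).subset fun x hx => ⟨hrank x v, hx⟩
  · exact ((finite_setOf_rankVector_eq_and_ne_last_in hno w).preimage
      Subtype.val_injective.injOn).subset fun x hx => ⟨hrank x w, hx⟩

end Colouring

theorem partition_into_stronglyCofinConnected_general (r : ℕ) (c : ℕ → ℕ → Fin (r + 1))
    (ℓ : Fin r → ℕ)
    (hno : ∀ i : Fin r,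
      ¬ ∃ l : List ℕ, IsMonoPathList c i.castSucc l ∧ l.length = ℓ i + 1) :
    ∃ 𝒰 : Finset (Set ℕ),
      (∀ U ∈ 𝒰, U.Nonempty) ∧
      (∀ U ∈ 𝒰, ∀ U' ∈ 𝒰, U ≠ U' → Disjoint U U') ∧
      (⋃ U ∈ 𝒰, U) = Set.univ ∧
      ∀ U ∈ 𝒰, U.Nontrivial →
        StronglyCofinConnected (fun x y : U => c x.val y.val = Fin.last r) := by
  obtain ⟨𝒰, hne, hdisj, hcover, hclass⟩ :=
    exists_finset_partition_into_infinite_fibres_or_singletons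
      (finite_range_rankVector (c := c) (ℓ := ℓ))
  refine ⟨𝒰, hne, hdisj, hcover, fun U hU hUnt => ?_⟩
  obtain ⟨hinf, τ, rfl⟩ := hclass U hU hUnt
  exact stronglyCofinConnected_of_subset_rankVector_preimage hno hinf subset_rfl

/-- For every `(r+1)`-edge-colouring of the complete symmetric digraph on `ℕ` with no
monochromatic directed path of edge-length `ℓ i` in colour `i` for any `i ∈ [r]`, there is
a finite partition `𝒰` of `ℕ` such that for every class `U ∈ 𝒰` with at least two
elements, the subgraph induced on `U` by the edges of colour `r+1` is strongly
`<ℵ₀`-connected. -/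
theorem partition_into_stronglyCofinConnected (r : ℕ) (c : ℕ → ℕ → Fin (r + 1))
    (ℓ : Fin r → ℕ) (hℓ : ∀ i, 0 < ℓ i)
    (hno : ∀ i : Fin r,
      ¬ ∃ l : List ℕ, IsMonoPathList c i.castSucc l ∧ l.length = ℓ i + 1) :
    ∃ 𝒰 : Finset (Set ℕ),
      (∀ U ∈ 𝒰, U.Nonempty) ∧
      (∀ U ∈ 𝒰, ∀ U' ∈ 𝒰, U ≠ U' → Disjoint U U') ∧
      (⋃ U ∈ 𝒰, U) = Set.univ ∧
      ∀ U ∈ 𝒰, U.Nontrivial →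
        StronglyCofinConnected (fun x y : U => c x.val y.val = Fin.last r) :=
  partition_into_stronglyCofinConnected_general r c ℓ hno
end

section
/- Let c : E(K↔_ℕ) → [r+1] be an edge-colouring of the complete symmetric digraph on ℕ containing no monochromatic directed path in colour k of edge-length ℓ_k. For each 0 ≤ i < ℓ_k let A_i be the set of vertices a such that the longest monochromatic directed path in colour k with first vertex a has edge-length exactly i. Then the nonempty A_i form a finite partition of ℕ, and for every i and every a ∈ A_i, the set {a' ∈ A_i : c(a', a) = k} has cardinality at most ℓ_k. -/
theorem Nat.exists_lt_and_not_succ_of_not {p : ℕ → Prop} (h0 : p 0) {n : ℕ} (hn : ¬ p n) :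
    ∃ i < n, p i ∧ ¬ p (i + 1) := by
  induction n with
  | zero => exact absurd h0 hn
  | succ n ih =>
    by_cases hp : p n
    · exact ⟨n, n.lt_succ_self, hp, hn⟩
    · obtain ⟨i, hi, hpi, hpi'⟩ := ih hp
      exact ⟨i, by omega, hpi, hpi'⟩

namespace IsMonoPathList

variable {V : Type*} {N : ℕ} {c : V → V → Fin N} {j : Fin N} {l : List V}

theorem singleton (a : V) : IsMonoPathList c j [a] :=
  ⟨List.nodup_singleton a, List.isChain_singleton a⟩

theorem take (hl : IsMonoPathList c j l) (n : ℕ) : IsMonoPathList c j (l.take n) :=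
  ⟨hl.1.sublist (List.take_sublist n l), hl.2.take n⟩

theorem cons {a b : V} (hl : IsMonoPathList c j l) (hb : l.head? = some b) (ha : a ∉ l)
    (hab : c a b = j) : IsMonoPathList c j (a :: l) := by
  refine ⟨List.nodup_cons.mpr ⟨ha, hl.1⟩, List.isChain_cons.mpr ⟨?_, hl.2⟩⟩
  rintro y hy
  rw [hb, Option.mem_some_iff] at hy
  exact hy ▸ hab

end IsMonoPathList

section HasMonoPathFrom

variable {V : Type*} {N : ℕ}

def HasMonoPathFrom (c : V → V → Fin N) (j : Fin N) (a : V) (m : ℕ) : Prop :=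
  ∃ l : List V, IsMonoPathList c j l ∧ l.head? = some a ∧ l.length = m + 1

variable {c : V → V → Fin N} {j : Fin N}

theorem hasMonoPathFrom_zero (a : V) : HasMonoPathFrom c j a 0 :=
  ⟨[a], IsMonoPathList.singleton a, rfl, rfl⟩

theorem HasMonoPathFrom.mono {a : V} {m n : ℕ} (h : HasMonoPathFrom c j a n) (hmn : m ≤ n) :
    HasMonoPathFrom c j a m := by
  obtain ⟨l, hl, hhead, hlen⟩ := h
  refine ⟨l.take (m + 1), hl.take _, ?_, by simp [hlen, hmn]⟩
  rw [List.head?_take, if_neg (Nat.succ_ne_zero m), hhead]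

theorem mem_of_not_hasMonoPathFrom_succ {a a' : V} {l : List V} (hl : IsMonoPathList c j l)
    (hhead : l.head? = some a) (hc : c a' a = j)
    (hno : ¬ HasMonoPathFrom c j a' l.length) : a' ∈ l := by
  by_contra ha'
  exact hno ⟨a' :: l, hl.cons hhead ha' hc, rfl, rfl⟩

theorem encard_inNeighbours_le_length {a : V} {l : List V} (hl : IsMonoPathList c j l)
    (hhead : l.head? = some a) {s : Set V} (hs : ∀ a' ∈ s, ¬ HasMonoPathFrom c j a' l.length) :
    {a' ∈ s | c a' a = j}.encard ≤ l.length := by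
  classical
  have hsub : {a' ∈ s | c a' a = j} ⊆ ↑l.toFinset := fun a' ⟨ha's, hc⟩ =>
    List.mem_toFinset.mpr (mem_of_not_hasMonoPathFrom_succ hl hhead hc (hs a' ha's))
  calc {a' ∈ s | c a' a = j}.encard ≤ (↑l.toFinset : Set V).encard := Set.encard_mono hsub
    _ = l.toFinset.card := Set.encard_coe_eq_coe_finsetCard _
    _ ≤ l.length := by exact_mod_cast l.toFinset_card_le

end HasMonoPathFrom

theorem partition_by_longest_path_general (r : ℕ) (c : ℕ → ℕ → Fin (r + 1)) (k : Fin (r + 1))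
    (ℓk : ℕ)
    (hno : ¬ ∃ l : List ℕ, IsMonoPathList c k l ∧ l.length = ℓk + 1)
    (A : ℕ → Set ℕ)
    (hA : ∀ i a, a ∈ A i ↔
      (∃ l : List ℕ, IsMonoPathList c k l ∧ l.head? = some a ∧ l.length = i + 1) ∧
      ¬ ∃ l : List ℕ, IsMonoPathList c k l ∧ l.head? = some a ∧ l.length = i + 2) :
    (∀ a : ℕ, ∃ i < ℓk, a ∈ A i) ∧
    (∀ i j, i ≠ j → Disjoint (A i) (A j)) ∧
    (∀ i, ∀ a ∈ A i, {a' ∈ A i | c a' a = k}.encard ≤ ℓk) := by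
  have hA : ∀ i a, a ∈ A i ↔ HasMonoPathFrom c k a i ∧ ¬ HasMonoPathFrom c k a (i + 1) := hA
  have hlong : ∀ a, ¬ HasMonoPathFrom c k a ℓk := fun a ⟨l, hl, _, hlen⟩ => hno ⟨l, hl, hlen⟩
  refine ⟨fun a => ?_, fun i i' hii' => ?_, fun i a ha => ?_⟩
  · obtain ⟨i, hi, hpath⟩ := Nat.exists_lt_and_not_succ_of_not (hasMonoPathFrom_zero a) (hlong a)
    exact ⟨i, hi, (hA i a).mpr hpath⟩
  · refine Set.disjoint_left.mpr fun a hai hai' => ?_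
    obtain ⟨hi, hi_succ⟩ := (hA i a).mp hai
    obtain ⟨hi', hi'_succ⟩ := (hA i' a).mp hai'
    rcases hii'.lt_or_gt with h | h
    · exact hi_succ (hi'.mono h)
    · exact hi'_succ (hi.mono h)
  · obtain ⟨hpath, hmax⟩ := (hA i a).mp ha
    have hi : i < ℓk := lt_of_not_ge fun h => hlong a (hpath.mono h)
    obtain ⟨l, hl, hhead, hlen⟩ := hpath
    calc {a' ∈ A i | c a' a = k}.encard ≤ l.length :=
          encard_inNeighbours_le_length hl hhead fun a' ha' => hlen ▸ ((hA i a').mp ha').2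
      _ ≤ ℓk := by rw [hlen]; exact_mod_cast hi

/-- Let `c` be an `(r+1)`-edge-colouring of the complete symmetric digraph on `ℕ` with no
monochromatic directed path in colour `k` of edge-length `ℓk`. For `i : ℕ`, let `A i` be
the set of vertices `a` such that the longest monochromatic directed path in colour `k`
starting at `a` has edge-length exactly `i` (it has a path of `i + 1` vertices starting at
`a`, but none with `i + 2` vertices). Then every vertex lies in `A i` for some `i < ℓk`,
the `A i` are pairwise disjoint (so the nonempty ones form a finite partition of `ℕ`), and
for every `i` and every `a ∈ A i`, the set `{a' ∈ A i : c a' a = k}` has at most `ℓk`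
elements. -/
theorem partition_by_longest_path (r : ℕ) (c : ℕ → ℕ → Fin (r + 1)) (k : Fin (r + 1))
    (ℓk : ℕ) (hℓk : 0 < ℓk)
    (hno : ¬ ∃ l : List ℕ, IsMonoPathList c k l ∧ l.length = ℓk + 1)
    (A : ℕ → Set ℕ)
    (hA : ∀ i a, a ∈ A i ↔
      (∃ l : List ℕ, IsMonoPathList c k l ∧ l.head? = some a ∧ l.length = i + 1) ∧
      ¬ ∃ l : List ℕ, IsMonoPathList c k l ∧ l.head? = some a ∧ l.length = i + 2) :
    (∀ a : ℕ, ∃ i < ℓk, a ∈ A i) ∧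
    (∀ i j, i ≠ j → Disjoint (A i) (A j)) ∧
    (∀ i, ∀ a ∈ A i, {a' ∈ A i | c a' a = k}.encard ≤ ℓk) :=
  partition_by_longest_path_general r c k ℓk hno A hA
end

section
/- Let c : E(K↔_ℕ) → [r+1] be an edge-colouring of the complete symmetric digraph on ℕ, let k ∈ [r+1] and m ∈ ℕ, and let V ⊆ ℕ be an infinite set such that for every v ∈ V the set {v' ∈ V : c(v', v) ≤ k} has cardinality at most m. Then the set X(V) = {v ∈ V : {v' ∈ V : c(v, v') > k} is finite} has cardinality at most m. -/
/-!
If `m + 1` vertices of `V` each had only finitely many out-neighbours of colour `> k`, then,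
`V` being infinite, some `w ∈ V` avoids all of these finitely many finite sets. Every edge from
those `m + 1` vertices into `w` then has colour `≤ k`, contradicting the in-degree bound at `w`.
-/

namespace Set

variable {α : Type*} {R : α → α → Prop} {V : Set α}

theorem Infinite.exists_mem_forall_not_rel (hV : V.Infinite) {S : Set α} (hS : S.Finite)
    (hR : ∀ v ∈ S, {w ∈ V | R v w}.Finite) : ∃ w ∈ V, ∀ v ∈ S, ¬ R v w := by
  have hU : (⋃ v ∈ S, {w ∈ V | R v w}).Finite := hS.biUnion hR
  obtain ⟨w, hwV, hwU⟩ := (hV.sdiff hU).nonempty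
  exact ⟨w, hwV, fun v hv hvw => hwU (mem_biUnion hv ⟨hwV, hvw⟩)⟩

theorem Infinite.encard_setOf_finite_rel_le (hV : V.Infinite) {m : ℕ}
    (h : ∀ w ∈ V, {v ∈ V | ¬ R v w}.encard ≤ m) :
    {v ∈ V | {w ∈ V | R v w}.Finite}.encard ≤ m := by
  by_contra! hlt
  obtain ⟨S, hSX, hScard⟩ := exists_subset_encard_eq (Order.add_one_le_of_lt hlt)
  have hS : S.Finite := finite_of_encard_eq_coe (k := m + 1) (by exact_mod_cast hScard)
  obtain ⟨w, hwV, hw⟩ := hV.exists_mem_forall_not_rel hS fun v hv => (hSX hv).2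
  have hSw : S ⊆ {v ∈ V | ¬ R v w} := fun v hv => ⟨(hSX hv).1, hw v hv⟩
  have : (m + 1 : ℕ∞) ≤ m := hScard ▸ (encard_le_encard hSw).trans (h w hwV)
  exact absurd this (by exact_mod_cast Nat.not_succ_le_self m)

end Set

/-- Let `c` be an `(r+1)`-edge-colouring of the complete symmetric digraph on `ℕ`, `k` a
colour, `m ∈ ℕ`, and `V ⊆ ℕ` an infinite set such that for every `v ∈ V` the set
`{v' ∈ V : c v' v ≤ k}` has at most `m` elements. Then the set
`X(V) = {v ∈ V : {v' ∈ V : c v v' > k} is finite}` has at most `m` elements. -/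
theorem few_vertices_with_finite_outneighbourhood (r : ℕ) (c : ℕ → ℕ → Fin (r + 1))
    (k : Fin (r + 1)) (m : ℕ) (V : Set ℕ) (hV : V.Infinite)
    (h : ∀ v ∈ V, {v' ∈ V | c v' v ≤ k}.encard ≤ m) :
    {v ∈ V | {v' ∈ V | k < c v v'}.Finite}.encard ≤ m :=
  hV.encard_setOf_finite_rel_le fun w hw => by simpa only [not_lt] using h w hw
end

section
/- Let c : E(K↔_ℕ) → [r+1] be an edge-colouring of the complete symmetric digraph on ℕ, and let U and U' be disjoint infinite subsets of ℕ such that the subgraph induced on each of U and U' by the edges of colour r+1 is strongly <ℵ₀-connected. If there exists an infinite directed matching from U to U' in colour r+1 and an infinite directed matching from U' to U in colour r+1, then the subgraph induced on U ∪ U' by the edges of colour r+1 is strongly <ℵ₀-connected. -/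
/-- `e` enumerates an infinite directed matching from `A` to `B` in colour `j`: an infinite
set of directed edges of colour `j` from `A` to `B`, no two of which share an endpoint. -/
def IsInfiniteDirMatching {N : ℕ} (c : ℕ → ℕ → Fin N) (j : Fin N) (A B : Set ℕ)
    (e : ℕ → ℕ × ℕ) : Prop :=
  (∀ n, (e n).1 ∈ A ∧ (e n).2 ∈ B ∧ c (e n).1 (e n).2 = j ∧ (e n).1 ≠ (e n).2) ∧
  (∀ m n, m ≠ n →
    (e m).1 ≠ (e n).1 ∧ (e m).1 ≠ (e n).2 ∧ (e m).2 ≠ (e n).1 ∧ (e m).2 ≠ (e n).2)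

section DirPaths

variable {V : Type*} {E : V → V → Prop}

def IsDirPath (E : V → V → Prop) (v w : V) (L : List V) : Prop :=
  L.Nodup ∧ L.IsChain E ∧ L.head? = some v ∧ L.getLast? = some w

/-- The inner vertex excludes the one-edge path `[v, w]`, which can occur only once in a family
of distinct paths. -/
def IsDirPathAvoiding (E : V → V → Prop) (X : Set V) (v w : V) (L : List V) : Prop :=
  IsDirPath E v w L ∧ (∃ x ∈ L, x ≠ v ∧ x ≠ w) ∧ ∀ x ∈ L, x ∈ X → x = v ∨ x = w

namespace IsDirPath

variable {u v w a b : V} {L L₁ L₂ : List V}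

theorem mem_right (h : IsDirPath E v w L) : w ∈ L :=
  List.mem_of_mem_getLast? h.2.2.2

theorem eq_pair (h : IsDirPath E v w L) (hvw : v ≠ w) (hL : ∀ x ∈ L, x = v ∨ x = w) :
    L = [v, w] := by
  obtain ⟨hnd, -, hhead, hlast⟩ := h
  rcases L with _ | ⟨x, _ | ⟨y, _ | ⟨z, t⟩⟩⟩
  · simp at hhead
  · simp_all
  · simp_all
  · simp only [List.mem_cons, forall_eq_or_imp, List.nodup_cons] at hL hnd
    grind

theorem map {W : Type*} {E' : W → W → Prop} {f : V → W} (hf : f.Injective)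
    (hE : ∀ x y, E x y → E' (f x) (f y)) (h : IsDirPath E v w L) :
    IsDirPath E' (f v) (f w) (L.map f) := by
  obtain ⟨hnd, hch, hhead, hlast⟩ := h
  refine ⟨hnd.map hf, (List.isChain_map f).mpr (hch.imp hE), ?_, ?_⟩
  · rw [List.head?_map, hhead, Option.map_some]
  · rw [List.getLast?_map, hlast, Option.map_some]

theorem append (h₁ : IsDirPath E u a L₁) (h₂ : IsDirPath E b w L₂) (hab : E a b)
    (hdisj : L₁.Disjoint L₂) : IsDirPath E u w (L₁ ++ L₂) := by
  obtain ⟨hnd₁, hch₁, hhead₁, hlast₁⟩ := h₁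
  obtain ⟨hnd₂, hch₂, hhead₂, hlast₂⟩ := h₂
  refine ⟨hnd₁.append hnd₂ hdisj, List.isChain_append.mpr ⟨hch₁, hch₂, ?_⟩, ?_, ?_⟩
  · simp_all
  · rw [List.head?_append, hhead₁]; rfl
  · rw [List.getLast?_append, hlast₂]; rfl

end IsDirPath

theorem IsDirPathAvoiding.map {W : Type*} {E' : W → W → Prop} {f : V → W} (hf : f.Injective)
    (hE : ∀ x y, E x y → E' (f x) (f y)) {X : Set W} {v w : V} {L : List V}
    (h : IsDirPathAvoiding E (f ⁻¹' X) v w L) :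
    IsDirPathAvoiding E' X (f v) (f w) (L.map f) := by
  obtain ⟨hL, ⟨x, hx, hxv, hxw⟩, havoid⟩ := h
  refine ⟨hL.map hf hE, ⟨f x, List.mem_map_of_mem hx, hf.ne hxv, hf.ne hxw⟩, ?_⟩
  simp only [List.mem_map, forall_exists_index, and_imp, forall_apply_eq_imp_iff₂]
  exact fun y hy hyX => (havoid y hy hyX).imp (congrArg f) (congrArg f)

theorem StronglyCofinConnected.exists_dirPathAvoiding (hc : StronglyCofinConnected E) {v w : V}
    (hvw : v ≠ w) {X : Set V} (hX : X.Finite) : ∃ L, IsDirPathAvoiding E X v w L := by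
  obtain ⟨P, hP, hdisj⟩ := hc v w hvw
  replace hP : ∀ n, IsDirPath E v w (P n) := hP
  have hbad : ({n | P n = [v, w]} ∪ ⋃ x ∈ X, {n | x ∈ P n ∧ x ≠ v ∧ x ≠ w}).Finite := by
    refine .union (Set.Subsingleton.finite ?_) (hX.biUnion fun x _ => Set.Subsingleton.finite ?_)
    · intro m hm n hn
      by_contra hmn
      exact (hdisj m n hmn).1 (hm.trans hn.symm)
    · rintro m ⟨hxm, hxv, hxw⟩ n ⟨hxn, -⟩
      by_contra hmn
      exact ((hdisj m n hmn).2 x hxm hxn).elim hxv hxw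
  obtain ⟨n, hn⟩ := hbad.infinite_compl.nonempty
  simp only [Set.mem_compl_iff, Set.mem_union, Set.mem_ofPred_eq, Set.mem_iUnion, not_or,
    not_exists, not_and] at hn
  refine ⟨P n, hP n, ?_, fun x hx hxX => ?_⟩
  · by_contra! h
    exact hn.1 ((hP n).eq_pair hvw fun x hx => or_iff_not_imp_left.mpr (h x hx))
  · by_contra! h
    exact hn.2 x hxX hx h.1 h.2

theorem stronglyCofinConnected_of_exists_dirPathAvoiding
    (H : ∀ v w : V, v ≠ w → ∀ X : Set V, X.Finite → ∃ L, IsDirPathAvoiding E X v w L) :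
    StronglyCofinConnected E := by
  classical
  intro v w hvw
  choose g hg using fun X : Finset V => H v w hvw X X.finite_toSet
  -- `used n` collects the vertices of the first `n` paths; path `n` avoids them inside.
  let used : ℕ → Finset V := fun n => Nat.rec ∅ (fun _ s => s ∪ (g s).toFinset) n
  have hused : Monotone used := monotone_nat_of_le_succ fun _ => Finset.subset_union_left
  have hpair : ∀ m n, m < n → g (used m) ≠ g (used n) ∧
      ∀ x ∈ g (used m), x ∈ g (used n) → x = v ∨ x = w := by
    intro m n hmn
    have hsub : ∀ x ∈ g (used m), x ∈ used n := fun x hx =>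
      hused hmn (Finset.mem_union_right _ (List.mem_toFinset.mpr hx))
    refine ⟨fun heq => ?_, fun x hxm hxn => (hg (used n)).2.2 x hxn (hsub x hxm)⟩
    obtain ⟨x, hx, hxv, hxw⟩ := (hg (used n)).2.1
    exact ((hg (used n)).2.2 x hx (hsub x (heq ▸ hx))).elim hxv hxw
  refine ⟨fun n => g (used n), fun n => (hg (used n)).1, fun m n hmn => ?_⟩
  rcases hmn.lt_or_gt with h | h
  · exact hpair m n h
  · exact ⟨(hpair n m h).1.symm, fun x hxm hxn => (hpair n m h).2 x hxn hxm⟩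

end DirPaths

section InducedSubdigraphs

variable {α : Type*} {E : α → α → Prop} {S A B W : Set α}

theorem exists_dirPathAvoiding_of_subset (hSW : S ⊆ W)
    (hS : StronglyCofinConnected fun x y : S => E x y) {v w : S} (hvw : v ≠ w) {X : Set W}
    (hX : X.Finite) :
    ∃ L, IsDirPathAvoiding (fun x y : W => E x y) X (Set.inclusion hSW v) (Set.inclusion hSW w) L ∧
      ∀ x ∈ L, x.1 ∈ S := by
  obtain ⟨L, hL⟩ :=
    hS.exists_dirPathAvoiding hvw (hX.preimage (Set.inclusion_injective hSW).injOn)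
  refine ⟨_, hL.map (Set.inclusion_injective hSW) fun _ _ h => h, ?_⟩
  simp only [List.mem_map, forall_exists_index, and_imp, forall_apply_eq_imp_iff₂]
  exact fun x _ => x.2

theorem exists_dirPathAvoiding_of_edges (hAW : A ⊆ W) (hBW : B ⊆ W) (hAB : Disjoint A B)
    (hA : StronglyCofinConnected fun x y : A => E x y)
    (hB : StronglyCofinConnected fun x y : B => E x y)
    (hedge : ∀ Y : Set α, Y.Finite → ∃ a ∈ A, ∃ b ∈ B, E a b ∧ a ∉ Y ∧ b ∉ Y)
    (v : A) (w : B) {X : Set W} (hX : X.Finite) :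
    ∃ L, IsDirPathAvoiding (fun x y : W => E x y) X (Set.inclusion hAW v)
      (Set.inclusion hBW w) L := by
  obtain ⟨a, ha, b, hb, hab, haY, hbY⟩ :=
    hedge (Subtype.val '' X ∪ {v.1, w.1}) ((hX.image _).union (Set.toFinite _))
  simp only [Set.mem_union, Set.mem_image, Set.mem_insert_iff, Set.mem_singleton_iff,
    not_or, not_exists, not_and] at haY hbY
  obtain ⟨L₁, ⟨hL₁, -, hL₁X⟩, hL₁A⟩ := exists_dirPathAvoiding_of_subset hAW hA
    (v := v) (w := ⟨a, ha⟩) (fun h => haY.2.1 (congrArg Subtype.val h).symm) hX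
  obtain ⟨L₂, ⟨hL₂, -, hL₂X⟩, hL₂B⟩ := exists_dirPathAvoiding_of_subset hBW hB
    (v := ⟨b, hb⟩) (w := w) (fun h => hbY.2.2 (congrArg Subtype.val h)) hX
  have hdisj : L₁.Disjoint L₂ := fun x h₁ h₂ => hAB.ne_of_mem (hL₁A x h₁) (hL₂B x h₂) rfl
  refine ⟨L₁ ++ L₂, hL₁.append hL₂ hab hdisj, ⟨_, List.mem_append_left _ hL₁.mem_right, ?_, ?_⟩,
    fun x hx hxX => ?_⟩
  · exact fun h => haY.2.1 (congrArg Subtype.val h)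
  · exact fun h => haY.2.2 (congrArg Subtype.val h)
  rcases List.mem_append.mp hx with hx | hx
  · refine .inl ((hL₁X x hx hxX).resolve_right ?_)
    rintro rfl
    exact haY.1 _ hxX rfl
  · refine .inr ((hL₂X x hx hxX).resolve_left ?_)
    rintro rfl
    exact hbY.1 _ hxX rfl

theorem stronglyCofinConnected_union (hAB : Disjoint A B)
    (hA : StronglyCofinConnected fun x y : A => E x y)
    (hB : StronglyCofinConnected fun x y : B => E x y)
    (hedgeAB : ∀ Y : Set α, Y.Finite → ∃ a ∈ A, ∃ b ∈ B, E a b ∧ a ∉ Y ∧ b ∉ Y)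
    (hedgeBA : ∀ Y : Set α, Y.Finite → ∃ b ∈ B, ∃ a ∈ A, E b a ∧ b ∉ Y ∧ a ∉ Y) :
    StronglyCofinConnected fun x y : ↥(A ∪ B) => E x y := by
  refine stronglyCofinConnected_of_exists_dirPathAvoiding ?_
  rintro ⟨v, hv | hv⟩ ⟨w, hw | hw⟩ hvw X hX
  · exact (exists_dirPathAvoiding_of_subset Set.subset_union_left hA (v := ⟨v, hv⟩)
      (w := ⟨w, hw⟩) (by rintro ⟨⟩; exact hvw rfl) hX).imp fun _ => And.left
  · exact exists_dirPathAvoiding_of_edges Set.subset_union_left Set.subset_union_right hAB hA hB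
      hedgeAB ⟨v, hv⟩ ⟨w, hw⟩ hX
  · exact exists_dirPathAvoiding_of_edges Set.subset_union_right Set.subset_union_left
      hAB.symm hB hA hedgeBA ⟨v, hv⟩ ⟨w, hw⟩ hX
  · exact (exists_dirPathAvoiding_of_subset Set.subset_union_right hB (v := ⟨v, hv⟩)
      (w := ⟨w, hw⟩) (by rintro ⟨⟩; exact hvw rfl) hX).imp fun _ => And.left

end InducedSubdigraphs

theorem IsInfiniteDirMatching.exists_edge_avoiding {N : ℕ} {c : ℕ → ℕ → Fin N} {j : Fin N}
    {A B : Set ℕ} {e : ℕ → ℕ × ℕ} (he : IsInfiniteDirMatching c j A B e) {Y : Set ℕ}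
    (hY : Y.Finite) : ∃ a ∈ A, ∃ b ∈ B, c a b = j ∧ a ∉ Y ∧ b ∉ Y := by
  have hsrc : Function.Injective fun n => (e n).1 := fun m n h =>
    not_not.mp fun hmn => (he.2 m n hmn).1 h
  have htgt : Function.Injective fun n => (e n).2 := fun m n h =>
    not_not.mp fun hmn => (he.2 m n hmn).2.2.2 h
  obtain ⟨n, hn⟩ :=
    ((hY.preimage hsrc.injOn).union (hY.preimage htgt.injOn)).infinite_compl.nonempty
  simp only [Set.mem_compl_iff, Set.mem_union, Set.mem_preimage, not_or] at hn
  obtain ⟨ha, hb, hc, -⟩ := he.1 n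
  exact ⟨_, ha, _, hb, hc, hn⟩

theorem union_stronglyCofinConnected_of_matchings_general (r : ℕ) (c : ℕ → ℕ → Fin (r + 1))
    (U U' : Set ℕ) (hdisj : Disjoint U U')
    (hcU : StronglyCofinConnected (fun x y : U => c x.val y.val = Fin.last r))
    (hcU' : StronglyCofinConnected (fun x y : U' => c x.val y.val = Fin.last r))
    (hM : ∃ e, IsInfiniteDirMatching c (Fin.last r) U U' e)
    (hM' : ∃ e, IsInfiniteDirMatching c (Fin.last r) U' U e) :
    StronglyCofinConnected (fun x y : ↥(U ∪ U') => c x.val y.val = Fin.last r) := by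
  obtain ⟨e, he⟩ := hM
  obtain ⟨e', he'⟩ := hM'
  exact stronglyCofinConnected_union (E := fun x y => c x y = Fin.last r) hdisj hcU hcU'
    (fun _ => he.exists_edge_avoiding) (fun _ => he'.exists_edge_avoiding)

/-- Let `c` be an `(r+1)`-edge-colouring of the complete symmetric digraph on `ℕ`, and let
`U`, `U'` be disjoint infinite subsets of `ℕ` on each of which the edges of colour `r+1`
induce a strongly `<ℵ₀`-connected digraph. If there are infinite directed matchings in
colour `r+1` both from `U` to `U'` and from `U'` to `U`, then the edges of colour `r+1`
induce a strongly `<ℵ₀`-connected digraph on `U ∪ U'`. -/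
theorem union_stronglyCofinConnected_of_matchings (r : ℕ) (c : ℕ → ℕ → Fin (r + 1))
    (U U' : Set ℕ) (hU : U.Infinite) (hU' : U'.Infinite) (hdisj : Disjoint U U')
    (hcU : StronglyCofinConnected (fun x y : U => c x.val y.val = Fin.last r))
    (hcU' : StronglyCofinConnected (fun x y : U' => c x.val y.val = Fin.last r))
    (hM : ∃ e, IsInfiniteDirMatching c (Fin.last r) U U' e)
    (hM' : ∃ e, IsInfiniteDirMatching c (Fin.last r) U' U e) :
    StronglyCofinConnected (fun x y : ↥(U ∪ U') => c x.val y.val = Fin.last r) :=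
  union_stronglyCofinConnected_of_matchings_general r c U U' hdisj hcU hcU' hM hM'
end

section
/- Let c : E(K↔_ℕ) → [r+1] be an edge-colouring of the complete symmetric digraph on ℕ, let u be a vertex and let U' be an infinite subset of ℕ not containing u such that the subgraph induced on U' by the edges of colour r+1 is strongly <ℵ₀-connected. If both the set of out-neighbours of u in U' in colour r+1 and the set of in-neighbours of u in U' in colour r+1 are infinite, then the subgraph induced on {u} ∪ U' by the edges of colour r+1 is strongly <ℵ₀-connected. -/
theorem exists_seq_pairwise_disjoint {α β : Type*} [DecidableEq β] (p : α → Prop)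
    (I : α → Finset β) (h : ∀ F : Finset β, ∃ a, p a ∧ Disjoint (I a) F) :
    ∃ P : ℕ → α, (∀ n, p (P n)) ∧ Pairwise fun m n => Disjoint (I (P m)) (I (P n)) := by
  choose next hnext using h
  -- `S n` collects the sets `I` of the first `n` chosen elements.
  let S : ℕ → Finset β := fun n => Nat.rec ∅ (fun _ s => s ∪ I (next s)) n
  have hmono : Monotone S := monotone_nat_of_le_succ fun n => Finset.subset_union_left
  have hsub : ∀ m n, m < n → I (next (S m)) ⊆ S n := fun m n hmn =>
    Finset.subset_union_right.trans (hmono hmn)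
  refine ⟨fun n => next (S n), fun n => (hnext _).1, fun m n hmn => ?_⟩
  rcases hmn.lt_or_gt with hlt | hgt
  · exact ((hnext (S n)).2.mono_right (hsub m n hlt)).symm
  · exact (hnext (S m)).2.mono_right (hsub n m hgt)

section Paths

variable {V W : Type*} {E : V → V → Prop} {v w : V}

def IsDirectedPath (E : V → V → Prop) (v w : V) (L : List V) : Prop :=
  L.Nodup ∧ L.IsChain E ∧ L.head? = some v ∧ L.getLast? = some w

def InfinitelyManyDisjointPaths (E : V → V → Prop) (v w : V) : Prop :=
  ∃ P : ℕ → List V, (∀ n, IsDirectedPath E v w (P n)) ∧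
    (∀ m n, m ≠ n → P m ≠ P n ∧ ∀ x, x ∈ P m → x ∈ P n → x = v ∨ x = w)

def innerVertices [DecidableEq V] (v w : V) (L : List V) : Finset V :=
  L.toFinset \ {v, w}

@[simp]
theorem mem_innerVertices [DecidableEq V] {L : List V} {x : V} :
    x ∈ innerVertices v w L ↔ x ∈ L ∧ x ≠ v ∧ x ≠ w := by
  simp [innerVertices]

namespace IsDirectedPath

variable {L : List V}

theorem head_mem (hL : IsDirectedPath E v w L) : v ∈ L :=
  List.mem_of_mem_head? hL.2.2.1

theorem map {E' : W → W → Prop} {f : V → W} (hf : Function.Injective f)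
    (hE : ∀ a b, E a b → E' (f a) (f b)) (hL : IsDirectedPath E v w L) :
    IsDirectedPath E' (f v) (f w) (L.map f) := by
  obtain ⟨hnd, hch, hhd, hlt⟩ := hL
  refine ⟨hnd.map hf, (List.isChain_map f).mpr (hch.imp hE), ?_, ?_⟩
  · simp [hhd]
  · simp [hlt]

theorem reverse (hL : IsDirectedPath E v w L) : IsDirectedPath (flip E) w v L.reverse := by
  obtain ⟨hnd, hch, hhd, hlt⟩ := hL
  exact ⟨List.nodup_reverse.mpr hnd, List.isChain_reverse.mpr hch, by simp [hlt], by simp [hhd]⟩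

theorem cons {x : V} (hL : IsDirectedPath E v w L) (hx : x ∉ L) (hxv : E x v) :
    IsDirectedPath E x w (x :: L) := by
  obtain ⟨hnd, hch, hhd, hlt⟩ := hL
  refine ⟨List.nodup_cons.mpr ⟨hx, hnd⟩, List.isChain_cons.mpr ⟨?_, hch⟩, rfl, ?_⟩
  · simp [hhd, hxv]
  · rw [List.getLast?_cons, hlt]
    rfl

end IsDirectedPath

theorem StronglyCofinConnected.infinitelyManyDisjointPaths (hc : StronglyCofinConnected E)
    (hvw : v ≠ w) : InfinitelyManyDisjointPaths E v w :=
  hc v w hvw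

namespace InfinitelyManyDisjointPaths

theorem map {E' : W → W → Prop} {f : V → W} (hf : Function.Injective f)
    (hE : ∀ a b, E a b → E' (f a) (f b)) (hP : InfinitelyManyDisjointPaths E v w) :
    InfinitelyManyDisjointPaths E' (f v) (f w) := by
  obtain ⟨P, hpath, hdisj⟩ := hP
  refine ⟨fun n => (P n).map f, fun n => (hpath n).map hf hE, fun m n hmn => ⟨?_, ?_⟩⟩
  · exact fun heq => (hdisj m n hmn).1 (List.map_injective_iff.mpr hf heq)
  · simp only [List.mem_map]
    rintro _ ⟨a, ha, rfl⟩ ⟨b, hb, hba⟩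
    rw [hf hba] at hb
    exact ((hdisj m n hmn).2 a ha hb).imp (congrArg f) (congrArg f)

theorem reverse (hP : InfinitelyManyDisjointPaths E v w) :
    InfinitelyManyDisjointPaths (flip E) w v := by
  obtain ⟨P, hpath, hdisj⟩ := hP
  refine ⟨fun n => (P n).reverse, fun n => (hpath n).reverse, fun m n hmn => ⟨?_, ?_⟩⟩
  · exact fun heq => (hdisj m n hmn).1 (List.reverse_injective heq)
  · simp only [List.mem_reverse]
    exact fun x hm hn => ((hdisj m n hmn).2 x hm hn).symm

/-- Each vertex is an inner vertex of at most one path of the family. -/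
theorem exists_avoiding [DecidableEq V] (hP : InfinitelyManyDisjointPaths E v w)
    (F : Finset V) : ∃ L, IsDirectedPath E v w L ∧ Disjoint (innerVertices v w L) F := by
  obtain ⟨P, hpath, hdisj⟩ := hP
  have hsub : ∀ x, {n | x ∈ innerVertices v w (P n)}.Subsingleton := by
    intro x m hm n hn
    by_contra hmn
    simp only [Set.mem_ofPred_eq, mem_innerVertices] at hm hn
    rcases (hdisj m n hmn).2 x hm.1 hn.1 with rfl | rfl
    exacts [hm.2.1 rfl, hm.2.2 rfl]
  have hbad : {n | ¬Disjoint (innerVertices v w (P n)) F}.Finite := by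
    refine (F.finite_toSet.biUnion fun x _ => (hsub x).finite).subset fun n hn => ?_
    obtain ⟨x, hx, hxF⟩ := Finset.not_disjoint_iff.mp hn
    exact Set.mem_biUnion hxF hx
  obtain ⟨n, hn⟩ := hbad.infinite_compl.nonempty
  exact ⟨P n, hpath n, not_not.mp hn⟩

end InfinitelyManyDisjointPaths

theorem infinitelyManyDisjointPaths_of_forall_exists_avoiding [DecidableEq V]
    (h : ∀ F : Finset V, ∃ L, (IsDirectedPath E v w L ∧ (innerVertices v w L).Nonempty) ∧
      Disjoint (innerVertices v w L) F) :
    InfinitelyManyDisjointPaths E v w := by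
  obtain ⟨P, hP, hdisj⟩ := exists_seq_pairwise_disjoint _ _ h
  refine ⟨P, fun n => (hP n).1, fun m n hmn => ⟨fun heq => ?_, fun x hm hn => ?_⟩⟩
  · obtain ⟨x, hx⟩ := (hP m).2
    exact Finset.disjoint_left.mp (hdisj hmn) hx (heq ▸ hx)
  · by_contra hx
    rw [not_or] at hx
    exact Finset.disjoint_left.mp (hdisj hmn) (mem_innerVertices.mpr ⟨hm, hx⟩)
      (mem_innerVertices.mpr ⟨hn, hx⟩)

theorem StronglyCofinConnected.reverse (hc : StronglyCofinConnected E) :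
    StronglyCofinConnected (flip E) :=
  fun _ _ hvw => (hc.infinitelyManyDisjointPaths hvw.symm).reverse

end Paths

section Insert

variable {V : Type*} {E : V → V → Prop} {U : Set V} {u : V}

theorem infinitelyManyDisjointPaths_insert_of_infinite_out (hu : u ∉ U)
    (hc : StronglyCofinConnected fun x y : U => E x y) (hout : {w ∈ U | E u w}.Infinite)
    {w : V} (hw : w ∈ U) :
    InfinitelyManyDisjointPaths (fun x y : ↥(insert u U) => E x y)
      ⟨u, Set.mem_insert u U⟩ ⟨w, Set.mem_insert_of_mem u hw⟩ := by
  classical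
  set ι := Set.inclusion (Set.subset_insert u U)
  have hι : Function.Injective ι := Set.inclusion_injective _
  refine infinitelyManyDisjointPaths_of_forall_exists_avoiding fun F => ?_
  obtain ⟨a, ⟨haU, hua⟩, ha⟩ :=
    (hout.sdiff ((F.image Subtype.val).finite_toSet.insert w)).nonempty
  have haw : a ≠ w := fun h => ha (Or.inl h)
  have haF : ι ⟨a, haU⟩ ∉ F := fun h =>
    ha (Or.inr (Finset.mem_coe.mpr (Finset.mem_image_of_mem Subtype.val h)))
  obtain ⟨L, hL, hLF⟩ := (hc.infinitelyManyDisjointPaths (v := ⟨a, haU⟩) (w := ⟨w, hw⟩)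
    (by simpa using haw)).exists_avoiding (F.preimage ι hι.injOn)
  have hmem : ∀ x ∈ L.map ι, x.val ∈ U := by
    simp only [List.mem_map]
    rintro _ ⟨y, -, rfl⟩
    exact y.2
  have hL' : IsDirectedPath (fun x y : ↥(insert u U) => E x y) (ι ⟨a, haU⟩) (ι ⟨w, hw⟩)
      (L.map ι) := hL.map hι fun _ _ h => h
  refine ⟨_, ⟨hL'.cons (fun h => hu (hmem _ h)) hua, ?_⟩, ?_⟩
  · refine ⟨ι ⟨a, haU⟩, mem_innerVertices.mpr ⟨?_, fun h => hu ?_, fun h => haw ?_⟩⟩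
    · exact List.mem_cons_of_mem _ (List.mem_map_of_mem hL.head_mem)
    · rwa [← show a = u from congrArg Subtype.val h]
    · simpa [ι] using h
  · refine Finset.disjoint_left.mpr fun x hx hxF => ?_
    obtain ⟨hxL, hxu, hxw⟩ := mem_innerVertices.mp hx
    obtain ⟨y, hy, rfl⟩ := List.mem_map.mp ((List.mem_cons.mp hxL).resolve_left hxu)
    by_cases hya : y = ⟨a, haU⟩
    · exact haF (hya ▸ hxF)
    · refine Finset.disjoint_left.mp hLF (mem_innerVertices.mpr ⟨hy, hya, ?_⟩)
        (Finset.mem_preimage.mpr hxF)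
      rintro rfl
      exact hxw rfl

theorem StronglyCofinConnected.induce_insert (hu : u ∉ U)
    (hc : StronglyCofinConnected fun x y : U => E x y) (hout : {w ∈ U | E u w}.Infinite)
    (hin : {w ∈ U | E w u}.Infinite) :
    StronglyCofinConnected fun x y : ↥(insert u U) => E x y := by
  rintro ⟨v, hv'⟩ ⟨w, hw'⟩ hvw
  rcases Set.mem_insert_iff.mp hv' with rfl | hv <;>
    rcases Set.mem_insert_iff.mp hw' with rfl | hw
  · exact absurd rfl hvw
  · exact infinitelyManyDisjointPaths_insert_of_infinite_out hu hc hout hw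
  · exact (infinitelyManyDisjointPaths_insert_of_infinite_out (E := flip E) hu hc.reverse hin
      hv).reverse
  · have hvw' : (⟨v, hv⟩ : U) ≠ ⟨w, hw⟩ := fun h => hvw (by simpa using h)
    exact (hc.infinitelyManyDisjointPaths hvw').map (E' := fun x y : ↥(insert u U) => E x y)
      (Set.inclusion_injective (Set.subset_insert u U)) fun _ _ h => h

end Insert

theorem insert_stronglyCofinConnected_general (r : ℕ) (c : ℕ → ℕ → Fin (r + 1)) (u : ℕ)
    (U' : Set ℕ) (hu : u ∉ U')
    (hc : StronglyCofinConnected (fun x y : U' => c x.val y.val = Fin.last r))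
    (hout : {w ∈ U' | c u w = Fin.last r}.Infinite)
    (hin : {w ∈ U' | c w u = Fin.last r}.Infinite) :
    StronglyCofinConnected (fun x y : ↥(insert u U') => c x.val y.val = Fin.last r) :=
  StronglyCofinConnected.induce_insert (E := fun x y => c x y = Fin.last r) hu hc hout hin

/-- Let `c` be an `(r+1)`-edge-colouring of the complete symmetric digraph on `ℕ`, let `u`
be a vertex and `U'` an infinite subset of `ℕ` not containing `u` on which the edges of
colour `r+1` induce a strongly `<ℵ₀`-connected digraph. If `u` has infinitely many
out-neighbours in `U'` in colour `r+1` and infinitely many in-neighbours in `U'` in colour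
`r+1`, then the edges of colour `r+1` induce a strongly `<ℵ₀`-connected digraph on
`{u} ∪ U'`. -/
theorem insert_stronglyCofinConnected (r : ℕ) (c : ℕ → ℕ → Fin (r + 1)) (u : ℕ)
    (U' : Set ℕ) (hU' : U'.Infinite) (hu : u ∉ U')
    (hc : StronglyCofinConnected (fun x y : U' => c x.val y.val = Fin.last r))
    (hout : {w ∈ U' | c u w = Fin.last r}.Infinite)
    (hin : {w ∈ U' | c w u = Fin.last r}.Infinite) :
    StronglyCofinConnected (fun x y : ↥(insert u U') => c x.val y.val = Fin.last r) :=
  insert_stronglyCofinConnected_general r c u U' hu hc hout hin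
end

section
/- Let the edge set of the complete graph K_n be partitioned into r spanning subgraphs G_1, ..., G_r. Then n ≤ ∏_{i≤r} χ(G_i), where χ(G_i) denotes the chromatic number of G_i. -/
/-!
Colouring each vertex by the tuple of its colours in optimal colourings of the `G i` properly
colours the union of the `G i` with `∏ i, χ(G i)` colours. When the `G i` cover every edge of
`K_n`, that union is `K_n` itself, whose chromatic number is `n`.
-/

namespace SimpleGraph

variable {V ι : Type*} {G : ι → SimpleGraph V}

def Coloring.pi {α : ι → Type*} (C : ∀ i, (G i).Coloring (α i)) :
    (⨆ i, G i).Coloring (∀ i, α i) :=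
  Coloring.mk (fun v i => C i v) fun {u v} huv huv' => by
    obtain ⟨i, hi⟩ := iSup_adj.mp huv
    exact (C i).valid hi (congrFun huv' i)

theorem colorable_iSup_prod [Fintype ι] {n : ι → ℕ} (h : ∀ i, (G i).Colorable (n i)) :
    (⨆ i, G i).Colorable (∏ i, n i) := by
  classical
  simpa using (Coloring.pi fun i => (h i).some).colorable

theorem chromaticNumber_iSup_le_prod [Finite V] [Fintype ι] :
    (⨆ i, G i).chromaticNumber ≤ ∏ i, (G i).chromaticNumber := by
  have hcol : ∀ i, (G i).Colorable (G i).chromaticNumber.toNat := fun i =>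
    (G i).colorable_chromaticNumber_of_fintype
  have hfin : ∀ i, ((G i).chromaticNumber.toNat : ℕ∞) = (G i).chromaticNumber := fun i =>
    ENat.natCast_toNat (chromaticNumber_ne_top_iff_exists.mpr ⟨_, hcol i⟩)
  calc (⨆ i, G i).chromaticNumber ≤ ((∏ i, (G i).chromaticNumber.toNat : ℕ) : ℕ∞) :=
        (colorable_iSup_prod hcol).chromaticNumber_le
    _ = ∏ i, (G i).chromaticNumber := by push_cast; simp only [hfin]

theorem iSup_eq_top_of_forall_ne_exists_adj (h : ∀ u v : V, u ≠ v → ∃ i, (G i).Adj u v) :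
    ⨆ i, G i = ⊤ :=
  top_le_iff.mp fun u v huv => iSup_adj.mpr (h u v huv)

end SimpleGraph

/-- If the edge set of the complete graph on a finite vertex type `V` is partitioned into
`r` spanning subgraphs `G 1, …, G r` (every edge of the complete graph lies in exactly one
`G i`), then `n ≤ ∏ i, χ(G i)`, where `n = |V|` and `χ` is the chromatic number. -/
theorem card_le_prod_chromaticNumber {V : Type*} [Fintype V] (r : ℕ)
    (G : Fin r → SimpleGraph V)
    (hpart : ∀ u v : V, u ≠ v → ∃! i : Fin r, (G i).Adj u v) :
    (Fintype.card V : ℕ∞) ≤ ∏ i, (G i).chromaticNumber := by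
  have hcover : ⨆ i, G i = ⊤ :=
    SimpleGraph.iSup_eq_top_of_forall_ne_exists_adj fun u v huv => (hpart u v huv).exists
  calc (Fintype.card V : ℕ∞) = (⨆ i, G i).chromaticNumber := by
        rw [hcover, SimpleGraph.chromaticNumber_top]
    _ ≤ ∏ i, (G i).chromaticNumber := SimpleGraph.chromaticNumber_iSup_le_prod
end
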